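/- arXiv:2605.03172 — 8 statements merged into one kernel-verified Lean document; each statement's English description precedes it below -/
import Mathlib

section
/- Let c > 0 and let ψ, ψ_k : [0,c] → ℝ (k ∈ ℕ) be continuous, strictly increasing functions with ψ(0) = ψ_k(0) = 0 for all k, such that ψ_k → ψ uniformly on [0,c]. For x ∈ [0, ψ(c)] define the generalized inverses φ_k(x) := inf({y ∈ [0,c] : ψ_k(y) ≥ x} ∪ {c}) and φ(x) := inf({y ∈ [0,c] : ψ(y) ≥ x} ∪ {c}), so that φ is the ordinary inverse of ψ on [0, ψ(c)]. Then φ_k → φ uniformly on [0, ψ(c)]. -/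
open Filter Set

lemma inv_mem_Icc (c : ℝ) (hc : 0 ≤ c) (f : ℝ → ℝ) (x : ℝ) :
    sInf ({y ∈ Icc 0 c | x ≤ f y} ∪ {c}) ∈ Icc 0 c := by
  have hsub : ({y ∈ Icc 0 c | x ≤ f y} ∪ {c}) ⊆ Icc 0 c := by
    rintro y (⟨hy, -⟩ | rfl)
    · exact hy
    · exact ⟨hc, le_rfl⟩
  have hne : ({y ∈ Icc 0 c | x ≤ f y} ∪ {c}).Nonempty := ⟨c, Or.inr rfl⟩
  have hbdd : BddBelow ({y ∈ Icc 0 c | x ≤ f y} ∪ {c}) :=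
    ⟨0, fun y hy => (hsub hy).1⟩
  exact ⟨le_csInf hne fun y hy => (hsub hy).1, csInf_le hbdd (Or.inr rfl)⟩

lemma apply_inv (c : ℝ) (hc : 0 ≤ c) (f : ℝ → ℝ)
    (hfc : ContinuousOn f (Icc 0 c)) (hfm : StrictMonoOn f (Icc 0 c)) (hf0 : f 0 = 0)
    {x : ℝ} (hx : x ∈ Icc 0 (f c)) :
    f (sInf ({y ∈ Icc 0 c | x ≤ f y} ∪ {c})) = x := by
  set S := {y ∈ Icc 0 c | x ≤ f y} with hS
  have hcS : c ∈ S := ⟨⟨hc, le_rfl⟩, hx.2⟩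
  have hUn : S ∪ {c} = S := union_eq_self_of_subset_right (by simpa using hcS)
  rw [hUn]
  have hne : S.Nonempty := ⟨c, hcS⟩
  have hbdd : BddBelow S := ⟨0, fun y hy => hy.1.1⟩
  have hclosed : IsClosed S := by
    have : S = Icc 0 c ∩ f ⁻¹' (Ici x) := by
      ext y
      simp only [hS, mem_setOf_eq, mem_inter_iff, mem_preimage, mem_Ici]
    rw [this]
    exact hfc.preimage_isClosed_of_isClosed isClosed_Icc isClosed_Ici
  have hm : sInf S ∈ S := hclosed.csInf_mem hne hbdd
  have h0m : (0:ℝ) ≤ sInf S := hm.1.1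
  have hxm : x ∈ Icc (f 0) (f (sInf S)) := ⟨by rw [hf0]; exact hx.1, hm.2⟩
  obtain ⟨y, hyIcc, hfy⟩ := intermediate_value_Icc h0m
    (hfc.mono (Icc_subset_Icc le_rfl hm.1.2)) hxm
  have hyS : y ∈ S := ⟨⟨hyIcc.1, hyIcc.2.trans hm.1.2⟩, hfy ▸ le_rfl⟩
  have h1 : sInf S ≤ y := csInf_le hbdd hyS
  have : y = sInf S := le_antisymm hyIcc.2 h1
  rw [← this, hfy]

lemma modulus (c : ℝ) (f : ℝ → ℝ)
    (hfc : ContinuousOn f (Icc 0 c)) (hfm : StrictMonoOn f (Icc 0 c))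
    {ε : ℝ} (hε : 0 < ε) :
    ∃ δ > 0, ∀ y ∈ Icc (0:ℝ) c, ∀ y' ∈ Icc (0:ℝ) c, |f y - f y'| < δ → |y - y'| < ε := by
  set K := (Icc (0:ℝ) c ×ˢ Icc (0:ℝ) c) ∩ {p : ℝ × ℝ | ε ≤ |p.1 - p.2|} with hK
  have hKc : IsCompact K := (isCompact_Icc.prod isCompact_Icc).inter_right
    (isClosed_le continuous_const ((continuous_fst.sub continuous_snd).abs))
  rcases K.eq_empty_or_nonempty with hKe | hKn
  · refine ⟨1, one_pos, fun y hy y' hy' _ => ?_⟩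
    by_contra h
    push_neg at h
    have : (y, y') ∈ K := ⟨⟨hy, hy'⟩, h⟩
    simp [hKe] at this
  · have hg : ContinuousOn (fun p : ℝ × ℝ => |f p.1 - f p.2|) K :=
      ((hfc.comp continuousOn_fst fun p hp => hp.1.1).sub
        (hfc.comp continuousOn_snd fun p hp => hp.1.2)).abs
    obtain ⟨p, hpK, hmin⟩ := hKc.exists_isMinOn hKn hg
    rw [isMinOn_iff] at hmin
    have hne : p.1 ≠ p.2 := by
      intro h
      have h2 : ε ≤ |p.1 - p.2| := hpK.2
      rw [h, sub_self, abs_zero] at h2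
      linarith
    have hδpos : 0 < |f p.1 - f p.2| := by
      rw [abs_pos, sub_ne_zero]
      exact fun h => hne (hfm.injOn hpK.1.1 hpK.1.2 h)
    refine ⟨_, hδpos, fun y hy y' hy' hlt => ?_⟩
    by_contra h
    push_neg at h
    exact absurd hlt (not_lt.2 (hmin (y, y') ⟨⟨hy, hy'⟩, h⟩))

/-- Uniform convergence of strictly increasing continuous functions
`ψ_k → ψ` on `[0,c]` (with `ψ_k 0 = ψ 0 = 0`) implies uniform convergence of their
generalized inverses on `[0, ψ c]`, where the generalized inverse of `ψ` at `x` is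
`inf ({y ∈ [0,c] : ψ y ≥ x} ∪ {c})`. -/
theorem stmt_1 (c : ℝ) (hc : 0 < c)
    (ψ : ℝ → ℝ) (ψk : ℕ → ℝ → ℝ)
    (hψc : ContinuousOn ψ (Icc 0 c)) (hψm : StrictMonoOn ψ (Icc 0 c)) (hψ0 : ψ 0 = 0)
    (hψkc : ∀ k, ContinuousOn (ψk k) (Icc 0 c))
    (hψkm : ∀ k, StrictMonoOn (ψk k) (Icc 0 c))
    (hψk0 : ∀ k, ψk k 0 = 0)
    (hunif : TendstoUniformlyOn ψk ψ atTop (Icc 0 c)) :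
    TendstoUniformlyOn
      (fun k x => sInf ({y ∈ Icc 0 c | x ≤ ψk k y} ∪ {c}))
      (fun x => sInf ({y ∈ Icc 0 c | x ≤ ψ y} ∪ {c}))
      atTop (Icc 0 (ψ c)) := by
  rw [Metric.tendstoUniformlyOn_iff] at hunif ⊢
  intro ε hε
  obtain ⟨δ, hδ, hmod⟩ := modulus c ψ hψc hψm hε
  filter_upwards [hunif (δ/2) (by positivity)] with k hk
  intro x hx
  set φx := sInf ({y ∈ Icc 0 c | x ≤ ψ y} ∪ {c}) with hφxd
  set φkx := sInf ({y ∈ Icc 0 c | x ≤ ψk k y} ∪ {c}) with hφkxd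
  have hφx : φx ∈ Icc (0:ℝ) c := inv_mem_Icc c hc.le ψ x
  have hψφ : ψ φx = x := apply_inv c hc.le ψ hψc hψm hψ0 hx
  rw [Real.dist_eq]
  by_cases hcase : x ≤ ψk k c
  · have hφk : φkx ∈ Icc (0:ℝ) c := inv_mem_Icc c hc.le (ψk k) x
    have hψkφ : ψk k φkx = x :=
      apply_inv c hc.le (ψk k) (hψkc k) (hψkm k) (hψk0 k) ⟨hx.1, hcase⟩
    apply hmod _ hφx _ hφk
    have := hk φkx hφk
    rw [Real.dist_eq] at this
    rw [hψφ, ← hψkφ]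
    calc |ψk k φkx - ψ φkx| = |ψ φkx - ψk k φkx| := abs_sub_comm _ _
      _ < δ / 2 := this
      _ < δ := by linarith
  · push_neg at hcase
    have hempty : {y ∈ Icc (0:ℝ) c | x ≤ ψk k y} = ∅ := by
      ext y
      simp only [mem_setOf_eq, mem_empty_iff_false, iff_false, not_and]
      intro hy hxy
      have : ψk k y ≤ ψk k c := (hψkm k).monotoneOn hy ⟨hc.le, le_rfl⟩ hy.2
      linarith
    have hφkc : φkx = c := by
      rw [hφkxd, hempty, empty_union, csInf_singleton]
    rw [hφkc]
    apply hmod _ hφx _ ⟨hc.le, le_rfl⟩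
    have := hk c ⟨hc.le, le_rfl⟩
    rw [Real.dist_eq] at this
    rw [hψφ]
    have h1 : x ≤ ψ c := hx.2
    have h2 : ψ c - ψk k c < δ / 2 := (abs_lt.1 this).2
    rw [abs_of_nonpos (by linarith)]
    linarith
end

section
/- Let E be a compact metric space and (π_j) Borel probability measures on E converging weakly to a Borel probability measure π. Let A_j ⊆ E be Borel sets with π_j(A_j) = 1 for all j, and let R ⊆ E be closed. Assume that every point of E which is the limit of a sequence (x_k) with x_k ∈ A_{j_k} for some strictly increasing sequence of indices (j_k) belongs to R (i.e., the Kuratowski upper limit of the sets A_j is contained in R). Then π(R) = 1. -/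
/-!
Every open neighbourhood `U` of `R` eventually contains all the `A j`: otherwise points of
`A j \ U` along a subsequence would, by compactness, accumulate at a point of the upper limit
outside `U`. Taking `U` the `ε`-thickening of `R`, the closed `ε`-thickening carries full
`π j`-mass for large `j`, hence full `π`-mass by the portmanteau theorem; letting `ε → 0`
gives `π R = 1` because `R` is closed.
-/

open MeasureTheory Filter Topology Metric

def upperKuratowskiLimit {E : Type*} [TopologicalSpace E] (A : ℕ → Set E) : Set E :=
  {x | ∃ j : ℕ → ℕ, StrictMono j ∧ ∃ xk : ℕ → E, (∀ k, xk k ∈ A (j k)) ∧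
    Tendsto xk atTop (𝓝 x)}

theorem eventually_subset_of_upperKuratowskiLimit_subset {E : Type*} [TopologicalSpace E]
    [SeqCompactSpace E] {A : ℕ → Set E} {U : Set E} (hU : IsOpen U)
    (hAU : upperKuratowskiLimit A ⊆ U) : ∀ᶠ j in atTop, A j ⊆ U := by
  by_contra h
  have hout : ∃ᶠ j in atTop, ∃ x ∈ A j, x ∉ U := by
    simpa only [not_eventually, Set.not_subset] using h
  obtain ⟨φ, hφ, hx⟩ := extraction_of_frequently_atTop hout
  choose x hxA hxU using hx
  obtain ⟨a, ψ, hψ, ha⟩ := SeqCompactSpace.tendsto_subseq x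
  have haU : a ∈ U := hAU ⟨φ ∘ ψ, hφ.comp hψ, x ∘ ψ, fun k => hxA (ψ k), ha⟩
  obtain ⟨k, hk⟩ := (ha.eventually (hU.mem_nhds haU)).exists
  exact hxU (ψ k) hk

theorem ProbabilityMeasure.measure_eq_one_of_tendsto {Ω ι : Type*} {L : Filter ι} [L.NeBot]
    [MeasurableSpace Ω] [TopologicalSpace Ω] [OpensMeasurableSpace Ω] [HasOuterApproxClosed Ω]
    {μ : ProbabilityMeasure Ω} {μs : ι → ProbabilityMeasure Ω} (hμ : Tendsto μs L (𝓝 μ))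
    {F : Set Ω} (hF : IsClosed F) (h : ∀ᶠ i in L, (μs i : Measure Ω) F = 1) :
    (μ : Measure Ω) F = 1 := by
  refine le_antisymm prob_le_one ?_
  calc (1 : ENNReal) = L.limsup fun i ↦ (μs i : Measure Ω) F :=
        ((limsup_congr h).trans (limsup_const 1)).symm
    _ ≤ (μ : Measure Ω) F := ProbabilityMeasure.limsup_measure_closed_le_of_tendsto hμ hF

theorem measure_eq_of_forall_measure_cthickening_eq {α : Type*} [PseudoMetricSpace α]
    [MeasurableSpace α] [OpensMeasurableSpace α] {μ : Measure α} [IsFiniteMeasure μ]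
    {s : Set α} (hs : IsClosed s) {c : ENNReal} (h : ∀ ε > 0, μ (cthickening ε s) = c) :
    μ s = c := by
  have hlim := (tendsto_measure_cthickening_of_isClosed
    ⟨1, one_pos, measure_ne_top μ _⟩ hs).mono_left (nhdsWithin_le_nhds (s := Set.Ioi 0))
  refine tendsto_nhds_unique hlim (tendsto_const_nhds.congr' ?_)
  filter_upwards [self_mem_nhdsWithin] with ε hε using (h ε hε).symm

theorem stmt_6_general {E : Type*} [MetricSpace E] [CompactSpace E]
    [MeasurableSpace E] [BorelSpace E]
    (π : ℕ → Measure E) (πl : Measure E)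
    [∀ j, IsProbabilityMeasure (π j)] [IsProbabilityMeasure πl]
    (hweak : ∀ g : E → ℝ, Continuous g → (∃ C, ∀ z, |g z| ≤ C) →
      Tendsto (fun j => ∫ z, g z ∂(π j)) atTop (𝓝 (∫ z, g z ∂πl)))
    (A : ℕ → Set E) (hA1 : ∀ j, π j (A j) = 1)
    (R : Set E) (hR : IsClosed R)
    (hK : ∀ x : E,
      (∃ j : ℕ → ℕ, StrictMono j ∧ ∃ xk : ℕ → E, (∀ k, xk k ∈ A (j k)) ∧
        Tendsto xk atTop (𝓝 x)) → x ∈ R) :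
    πl R = 1 := by
  let μs : ℕ → ProbabilityMeasure E := fun j => ⟨π j, inferInstance⟩
  have hlim : Tendsto μs atTop (𝓝 ⟨πl, inferInstance⟩) :=
    ProbabilityMeasure.tendsto_iff_forall_integral_tendsto.2 fun f =>
      hweak f f.continuous ⟨‖f‖, f.norm_coe_le_norm⟩
  refine measure_eq_of_forall_measure_cthickening_eq hR fun ε hε => ?_
  refine ProbabilityMeasure.measure_eq_one_of_tendsto hlim isClosed_cthickening ?_
  filter_upwards [eventually_subset_of_upperKuratowskiLimit_subset isOpen_thickening
    fun x hx => self_subset_thickening hε R (hK x hx)] with j hj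
  exact le_antisymm prob_le_one
    ((hA1 j).symm.trans_le (measure_mono (hj.trans (thickening_subset_cthickening ε R))))

/-- Let `E` be a compact metric space, `π_j → π` weakly (Borel
probability measures), `A_j` Borel sets with `π_j (A_j) = 1`, and `R` closed.  If every
limit of a sequence `x_k ∈ A_{j_k}` (for a strictly increasing sequence of indices `j_k`)
belongs to `R` (i.e. the Kuratowski upper limit of the `A_j` is contained in `R`), then
`π R = 1`. -/
theorem stmt_6 {E : Type*} [MetricSpace E] [CompactSpace E]
    [MeasurableSpace E] [BorelSpace E]
    (π : ℕ → Measure E) (πl : Measure E)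
    [∀ j, IsProbabilityMeasure (π j)] [IsProbabilityMeasure πl]
    (hweak : ∀ g : E → ℝ, Continuous g → (∃ C, ∀ z, |g z| ≤ C) →
      Tendsto (fun j => ∫ z, g z ∂(π j)) atTop (𝓝 (∫ z, g z ∂πl)))
    (A : ℕ → Set E) (hAm : ∀ j, MeasurableSet (A j)) (hA1 : ∀ j, π j (A j) = 1)
    (R : Set E) (hR : IsClosed R)
    (hK : ∀ x : E,
      (∃ j : ℕ → ℕ, StrictMono j ∧ ∃ xk : ℕ → E, (∀ k, xk k ∈ A (j k)) ∧
        Tendsto xk atTop (𝓝 x)) → x ∈ R) :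
    πl R = 1 :=
  stmt_6_general π πl hweak A hA1 R hR hK
end

section
/- Let X be a separable metric space and (μ_j) Borel probability measures on X converging weakly to a Borel probability measure μ. Then for every point x in the support of μ there exists a sequence (x_j) with x_j in the support of μ_j for every j and x_j → x. -/
open MeasureTheory Filter Topology

/-- The support of a Borel measure: the set of points all of whose open neighbourhoods
have positive measure. -/
def MeasSupport {Y : Type*} [TopologicalSpace Y] [MeasurableSpace Y]
    (μ : Measure Y) : Set Y :=
  {x | ∀ U : Set Y, IsOpen U → x ∈ U → 0 < μ U}

/-!
By the portmanteau theorem, `liminf μ_j(U) ≥ μ(U) > 0` for every open ball `U` around a point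
of `supp μ`, so eventually `μ_j(U) > 0`. In a second-countable space a set of positive measure
meets the support, so `dist(x, supp μ_j) → 0`, and points of `supp μ_j` almost realizing these
distances converge to `x`.
-/

lemma measSupport_eq_support {Y : Type*} [TopologicalSpace Y] [MeasurableSpace Y]
    (μ : Measure Y) : MeasSupport μ = μ.support := by
  rw [Measure.support_eq_forall_isOpen]
  ext x
  exact forall_congr' fun _ => forall_comm

lemma MeasureTheory.ProbabilityMeasure.eventually_nonempty_inter_support_of_tendsto {Ω ι : Type*}
    {L : Filter ι} [MeasurableSpace Ω] [TopologicalSpace Ω] [OpensMeasurableSpace Ω]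
    [HasOuterApproxClosed Ω] [HereditarilyLindelofSpace Ω]
    {μ : ProbabilityMeasure Ω} {μs : ι → ProbabilityMeasure Ω} (hlim : Tendsto μs L (𝓝 μ))
    {U : Set Ω} (hU : IsOpen U) (hpos : 0 < (μ : Measure Ω) U) :
    ∀ᶠ i in L, (U ∩ (μs i : Measure Ω).support).Nonempty := by
  have hliminf := hpos.trans_le (le_liminf_measure_open_of_tendsto hlim hU)
  filter_upwards [eventually_lt_of_lt_liminf hliminf] with i hi
  exact Measure.nonempty_inter_support_of_pos hi

lemma Metric.tendsto_infDist_zero_of_eventually_ball_inter_nonempty {α ι : Type*}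
    [PseudoMetricSpace α] {L : Filter ι} {S : ι → Set α} {x : α}
    (h : ∀ ε > 0, ∀ᶠ i in L, (Metric.ball x ε ∩ S i).Nonempty) :
    Tendsto (fun i => Metric.infDist x (S i)) L (𝓝 0) := by
  rw [Metric.tendsto_nhds]
  intro ε hε
  filter_upwards [h ε hε] with i ⟨y, hyx, hyS⟩
  rw [Real.dist_eq, sub_zero, abs_of_nonneg Metric.infDist_nonneg]
  exact (Metric.infDist_le_dist_of_mem hyS).trans_lt (by rwa [dist_comm])

lemma Metric.exists_seq_mem_tendsto_of_tendsto_infDist {α : Type*} [PseudoMetricSpace α]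
    {S : ℕ → Set α} {x : α} (hne : ∀ j, (S j).Nonempty)
    (h : Tendsto (fun j => Metric.infDist x (S j)) atTop (𝓝 0)) :
    ∃ y : ℕ → α, (∀ j, y j ∈ S j) ∧ Tendsto y atTop (𝓝 x) := by
  have hnear : ∀ j : ℕ, ∃ z ∈ S j, dist x z < Metric.infDist x (S j) + 1 / (j + 1) :=
    fun j => (Metric.infDist_lt_iff (hne j)).1 (lt_add_of_pos_right _ Nat.one_div_pos_of_nat)
  choose y hyS hyx using hnear
  refine ⟨y, hyS, tendsto_iff_dist_tendsto_zero.2 ?_⟩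
  refine squeeze_zero (fun _ => dist_nonneg) (fun j => (dist_comm (y j) x).trans_le (hyx j).le) ?_
  simpa using h.add tendsto_one_div_add_atTop_nhds_zero_nat

/-- Let `X` be a separable metric space and `μ_j → μ` weakly (Borel
probability measures).  Then every point of the support of `μ` is the limit of a sequence
of points `x_j ∈ supp μ_j`. -/
theorem stmt_7 {X : Type*} [MetricSpace X] [TopologicalSpace.SeparableSpace X]
    [MeasurableSpace X] [BorelSpace X]
    (μ : ℕ → Measure X) (μl : Measure X)
    [∀ j, IsProbabilityMeasure (μ j)] [IsProbabilityMeasure μl]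
    (hweak : ∀ g : X → ℝ, Continuous g → (∃ C, ∀ z, |g z| ≤ C) →
      Tendsto (fun j => ∫ z, g z ∂(μ j)) atTop (𝓝 (∫ z, g z ∂μl))) :
    ∀ x ∈ MeasSupport μl, ∃ xj : ℕ → X,
      (∀ j, xj j ∈ MeasSupport (μ j)) ∧ Tendsto xj atTop (𝓝 x) := by
  have : SecondCountableTopology X := UniformSpace.secondCountable_of_separable X
  intro x hx
  simp only [measSupport_eq_support] at hx ⊢
  let P : ℕ → ProbabilityMeasure X := fun j => ⟨μ j, inferInstance⟩
  let Pl : ProbabilityMeasure X := ⟨μl, inferInstance⟩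
  have hlim : Tendsto P atTop (𝓝 Pl) := by
    rw [ProbabilityMeasure.tendsto_iff_forall_integral_tendsto]
    exact fun f => hweak f f.continuous
      ⟨‖f‖, fun z => by simpa [Real.norm_eq_abs] using f.norm_coe_le_norm z⟩
  refine Metric.exists_seq_mem_tendsto_of_tendsto_infDist
    (fun j => Measure.nonempty_support (IsProbabilityMeasure.ne_zero _)) ?_
  refine Metric.tendsto_infDist_zero_of_eventually_ball_inter_nonempty fun ε hε => ?_
  exact ProbabilityMeasure.eventually_nonempty_inter_support_of_tendsto hlim Metric.isOpen_ball
    ((Measure.mem_support_iff_forall x).1 hx _ (Metric.ball_mem_nhds x hε))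
end

section
/- Work in ℝ^{1+3} = ℝ × ℝ³ with the future causal cone C := {(t,ξ) ∈ ℝ × ℝ³ : ‖ξ‖ ≤ t}, where ‖·‖ is the Euclidean norm. Call a continuous curve γ : [0,1] → ℝ^{1+3} future-directed causal if γ(t) − γ(s) ∈ C whenever 0 ≤ s ≤ t ≤ 1. Let Ω ⊆ ℝ^{1+3} be open, let p, q ∈ Ω, and let K be the union of the images of all future-directed causal curves γ : [0,1] → Ω with γ(0) = p and γ(1) = q. Assume K ≠ ∅ and that there exists δ > 0 such that the open ball of radius δ around every point of K is contained in Ω. Then every future-directed causal curve γ : [0,1] → ℝ^{1+3} with γ(0) = p and γ(1) = q takes values in Ω; consequently, K equals the full Minkowski causal diamond, i.e., the union of the images of all future-directed causal curves in ℝ^{1+3} from p to q. -/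
open Set

/-- Minkowski space `ℝ^{1+3} = ℝ × ℝ³`. -/
abbrev Mink : Type := ℝ × EuclideanSpace ℝ (Fin 3)

/-- A continuous curve `γ : [0,1] → ℝ^{1+3}` is future-directed causal if
`γ t − γ s` lies in the future causal cone `{(t,ξ) : ‖ξ‖ ≤ t}` whenever `s ≤ t`. -/
def IsFDCausal (γ : ℝ → Mink) : Prop :=
  ContinuousOn γ (Icc 0 1) ∧
    ∀ s ∈ Icc (0:ℝ) 1, ∀ t ∈ Icc (0:ℝ) 1, s ≤ t → ‖(γ t - γ s).2‖ ≤ (γ t - γ s).1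

/-- The union of the images of all future-directed causal curves from `p` to `q`
taking values in `Ω`. -/
def causalDiamondIn (Ω : Set Mink) (p q : Mink) : Set Mink :=
  {x | ∃ γ : ℝ → Mink, IsFDCausal γ ∧ γ 0 = p ∧ γ 1 = q ∧
        (∀ t ∈ Icc (0:ℝ) 1, γ t ∈ Ω) ∧ ∃ t ∈ Icc (0:ℝ) 1, γ t = x}

/-! Fix a causal curve `γ₀` from `p` to `q` inside `Ω`. For any causal curve `γ` from `p` to `q`,
the interpolations `lineMap γ₀ γ l`, `l ∈ [0, 1]`, are again causal from `p` to `q`, by convexity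
of the cone. Changing `l` by less than `δ / sup ‖γ₀ - γ‖` moves every point by less than `δ`, so
if the `l`-th interpolation lies in `Ω` (hence in `K`), so do the nearby ones; connectedness of
`[0, 1]` carries this from `l = 0` to `l = 1`. -/

open AffineMap

def futureCone : Set Mink := {v | ‖v.2‖ ≤ v.1}

theorem convex_futureCone : Convex ℝ futureCone := by
  intro x hx y hy a b ha hb _
  calc ‖(a • x + b • y).2‖ ≤ a * ‖x.2‖ + b * ‖y.2‖ := by
        simpa [norm_smul, abs_of_nonneg ha, abs_of_nonneg hb] using norm_add_le (a • x.2) (b • y.2)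
    _ ≤ a * x.1 + b * y.1 := by gcongr <;> assumption
    _ = (a • x + b • y).1 := by simp

theorem IsFDCausal.lineMap {γ₀ γ : ℝ → Mink} (h₀ : IsFDCausal γ₀) (h : IsFDCausal γ)
    {l : ℝ} (hl : l ∈ Icc (0:ℝ) 1) : IsFDCausal fun t => lineMap (γ₀ t) (γ t) l := by
  refine ⟨h₀.1.lineMap h.1 continuousOn_const, fun s hs t ht hst => ?_⟩
  rw [← vsub_eq_sub, lineMap_vsub_lineMap]
  exact convex_futureCone.lineMap_mem (h₀.2 s hs t ht hst) (h.2 s hs t ht hst) hl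

theorem IsPreconnected.subset_of_forall_dist_lt {α : Type*} [PseudoMetricSpace α] {s S : Set α}
    {a : α} {ε : ℝ} (hs : IsPreconnected s) (hε : 0 < ε) (ha : a ∈ s) (haS : a ∈ S)
    (hstep : ∀ x ∈ s, x ∈ S → ∀ y ∈ s, dist x y < ε → y ∈ S) : s ⊆ S := by
  intro y hy
  refine (hs.induction₂ (fun x y => x ∈ S ↔ y ∈ S) (fun x hx => ?_) (fun _ _ _ _ _ _ => Iff.trans)
    (fun _ _ _ _ => Iff.symm) ha hy).1 haS
  filter_upwards [self_mem_nhdsWithin, nhdsWithin_le_nhds (Metric.ball_mem_nhds x hε)]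
    with y hys hyx
  exact ⟨fun hxS => hstep x hx hxS y hys (by rwa [dist_comm]),
    fun hyS => hstep y hys hyS x hx hyx⟩

theorem lineMap_mem_causalDiamondIn {Ω : Set Mink} {p q : Mink} {γ₀ γ : ℝ → Mink}
    (h₀ : IsFDCausal γ₀) (h : IsFDCausal γ) (hγ₀0 : γ₀ 0 = p) (hγ₀1 : γ₀ 1 = q)
    (hγ0 : γ 0 = p) (hγ1 : γ 1 = q) {l : ℝ} (hl : l ∈ Icc (0:ℝ) 1)
    (hΩ : ∀ t ∈ Icc (0:ℝ) 1, lineMap (γ₀ t) (γ t) l ∈ Ω) {t : ℝ} (ht : t ∈ Icc (0:ℝ) 1) :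
    lineMap (γ₀ t) (γ t) l ∈ causalDiamondIn Ω p q :=
  ⟨_, h₀.lineMap h hl, by simp [hγ₀0, hγ0], by simp [hγ₀1, hγ1], hΩ, t, ht, rfl⟩

theorem IsFDCausal.mapsTo_of_ball_subset {Ω : Set Mink} {p q : Mink} {γ₀ γ : ℝ → Mink} {δ : ℝ}
    (h₀ : IsFDCausal γ₀) (hγ₀0 : γ₀ 0 = p) (hγ₀1 : γ₀ 1 = q)
    (hγ₀Ω : ∀ t ∈ Icc (0:ℝ) 1, γ₀ t ∈ Ω) (hδ : 0 < δ)
    (hK : ∀ x ∈ causalDiamondIn Ω p q, Metric.ball x δ ⊆ Ω)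
    (h : IsFDCausal γ) (hγ0 : γ 0 = p) (hγ1 : γ 1 = q) : MapsTo γ (Icc 0 1) Ω := by
  obtain ⟨M, hM⟩ := isCompact_Icc.exists_bound_of_continuousOn (h₀.1.sub h.1)
  have hM1 : 0 < M + 1 := by linarith [(norm_nonneg _).trans (hM 0 ⟨le_rfl, zero_le_one⟩)]
  have hS : Icc (0:ℝ) 1 ⊆ {l | ∀ t ∈ Icc (0:ℝ) 1, AffineMap.lineMap (γ₀ t) (γ t) l ∈ Ω} := by
    refine isPreconnected_Icc.subset_of_forall_dist_lt (div_pos hδ hM1) ⟨le_rfl, zero_le_one⟩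
      (by simpa using hγ₀Ω) fun l hl hlΩ l' _ hll' t ht => ?_
    refine hK _ (lineMap_mem_causalDiamondIn h₀ h hγ₀0 hγ₀1 hγ0 hγ1 hl hlΩ ht) ?_
    rw [Metric.mem_ball, dist_lineMap_lineMap, dist_comm l']
    calc dist l l' * dist (γ₀ t) (γ t) ≤ dist l l' * (M + 1) := by
          gcongr
          exact (dist_eq_norm _ _).trans_le ((hM t ht).trans (by linarith))
      _ < δ / (M + 1) * (M + 1) := by gcongr
      _ = δ := div_mul_cancel₀ δ hM1.ne'
  intro t ht
  simpa using hS ⟨zero_le_one, le_rfl⟩ t ht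

theorem causalDiamondIn_eq_univ_of_forall_mem {Ω : Set Mink} {p q : Mink}
    (hΩ : ∀ γ : ℝ → Mink, IsFDCausal γ → γ 0 = p → γ 1 = q → ∀ t ∈ Icc (0:ℝ) 1, γ t ∈ Ω) :
    causalDiamondIn Ω p q = causalDiamondIn univ p q := by
  ext x
  constructor
  · rintro ⟨γ, h, h0, h1, -, hx⟩
    exact ⟨γ, h, h0, h1, fun t _ => mem_univ _, hx⟩
  · rintro ⟨γ, h, h0, h1, -, hx⟩
    exact ⟨γ, h, h0, h1, hΩ γ h h0 h1, hx⟩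

theorem stmt_10_general (Ω : Set Mink) (p q : Mink)
    (hne : (causalDiamondIn Ω p q).Nonempty)
    (hδ : ∃ δ > (0:ℝ), ∀ x ∈ causalDiamondIn Ω p q, Metric.ball x δ ⊆ Ω) :
    (∀ γ : ℝ → Mink, IsFDCausal γ → γ 0 = p → γ 1 = q → ∀ t ∈ Icc (0:ℝ) 1, γ t ∈ Ω) ∧
      causalDiamondIn Ω p q = causalDiamondIn Set.univ p q := by
  obtain ⟨-, γ₀, h₀, hγ₀0, hγ₀1, hγ₀Ω, -⟩ := hne
  obtain ⟨δ, hδ, hK⟩ := hδ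
  have hΩ : ∀ γ : ℝ → Mink, IsFDCausal γ → γ 0 = p → γ 1 = q → ∀ t ∈ Icc (0:ℝ) 1, γ t ∈ Ω :=
    fun γ h hγ0 hγ1 => h₀.mapsTo_of_ball_subset hγ₀0 hγ₀1 hγ₀Ω hδ hK h hγ0 hγ1
  exact ⟨hΩ, causalDiamondIn_eq_univ_of_forall_mem hΩ⟩

/-- Let `Ω ⊆ ℝ^{1+3}` be open, `p, q ∈ Ω`, and let `K` be the union of
images of future-directed causal curves from `p` to `q` inside `Ω`.  If `K ≠ ∅` and some
`δ`-neighbourhood of `K` is contained in `Ω`, then every future-directed causal curve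
from `p` to `q` in `ℝ^{1+3}` takes values in `Ω`; consequently `K` equals the full
Minkowski causal diamond of `p` and `q`. -/
theorem stmt_10 (Ω : Set Mink) (hΩ : IsOpen Ω) (p q : Mink) (hp : p ∈ Ω) (hq : q ∈ Ω)
    (hne : (causalDiamondIn Ω p q).Nonempty)
    (hδ : ∃ δ > (0:ℝ), ∀ x ∈ causalDiamondIn Ω p q, Metric.ball x δ ⊆ Ω) :
    (∀ γ : ℝ → Mink, IsFDCausal γ → γ 0 = p → γ 1 = q → ∀ t ∈ Icc (0:ℝ) 1, γ t ∈ Ω) ∧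
      causalDiamondIn Ω p q = causalDiamondIn Set.univ p q :=
  stmt_10_general Ω p q hne hδ
end

section
/- Define Q : ℝ × ℝ × ℝ² → ℝ by Q(u,v,w) := u·v − ‖w‖², where ‖·‖ is the Euclidean norm on ℝ². (i) For every c > 0, the level set {Q = c} has exactly two connected components, namely {Q = c} ∩ {u > 0} and {Q = c} ∩ {u < 0} (each nonempty and connected), and the complement ℝ⁴ ∖ {Q = c} has exactly three connected components, namely {Q < c}, {Q > c} ∩ {u > 0}, and {Q > c} ∩ {u < 0}. (ii) For every c < 0, the level set {Q = c} is nonempty and connected, and the complement ℝ⁴ ∖ {Q = c} has exactly two connected components, namely {Q < c} and {Q > c}. -/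
/-- The quadratic `Q(u,v,w) := u·v − ‖w‖²` on `ℝ × ℝ × ℝ²`. -/
noncomputable def Qf (x : ℝ × ℝ × EuclideanSpace ℝ (Fin 2)) : ℝ :=
  x.1 * x.2.1 - ‖x.2.2‖ ^ 2

/-!
Write `Q(u, v, w) = u v - ‖w‖²` with `w` in any real normed space `E`. Where `u ≠ 0` the equation
`Q = q` can be solved for `v`, so for a connected `I ⊆ ℝ` and a connected `J ∌ 0` the set
`{Q ∈ I, u ∈ J}` is the continuous image of `J × I × E`; this makes both halves `±u > 0` of
`{Q ∈ I}` connected. On the hyperplane `u = 0`, `Q = -‖w‖²` does not depend on `v`, and each point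
`(0, 0, w)` with `-‖w‖² ∈ I` is adherent to both halves. Hence `{Q ∈ I}` is connected as soon as
such a `w` exists, which is the case for `{Q < c}`, for `{Q > c}` with `c < 0` and for `{Q = c}`
with `c < 0` (if `E ≠ 0`). When `c > 0`, on the other hand, `u` cannot vanish where `Q ≥ c`, so
the halves are relatively clopen, and the connected components are the connected pieces of a
partition into relatively open sets.
-/

open Set

section ConnectedComponentIn

variable {X : Type*} [TopologicalSpace X]

theorem connectedComponentIn_eq_inter_of_subset_union {S U V : Set X} (hU : IsOpen U)
    (hV : IsOpen V) (hUV : Disjoint U V) (hS : S ⊆ U ∪ V) (hSU : IsPreconnected (S ∩ U))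
    {x : X} (hx : x ∈ S ∩ U) : connectedComponentIn S x = S ∩ U := by
  have hsub : connectedComponentIn S x ⊆ S := connectedComponentIn_subset S x
  have hU' : connectedComponentIn S x ⊆ U :=
    isPreconnected_connectedComponentIn.subset_left_of_subset_union hU hV hUV (hsub.trans hS)
      ⟨x, mem_connectedComponentIn hx.1, hx.2⟩
  exact (subset_inter hsub hU').antisymm (hSU.subset_connectedComponentIn hx inter_subset_left)

theorem connectedComponentIn_eq_of_subset_union {S P V : Set X} (hP : IsOpen P) (hV : IsOpen V)
    (hPV : Disjoint P V) (hS : S ⊆ P ∪ V) (hPS : P ⊆ S) (hPc : IsPreconnected P) {x : X}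
    (hx : x ∈ P) : connectedComponentIn S x = P := by
  rw [← inter_eq_right.2 hPS] at hPc hx ⊢
  exact connectedComponentIn_eq_inter_of_subset_union hP hV hPV hS hPc hx

end ConnectedComponentIn

section LorentzForm

variable {E : Type*} [NormedAddCommGroup E]

noncomputable def lorentzForm (x : ℝ × ℝ × E) : ℝ := x.1 * x.2.1 - ‖x.2.2‖ ^ 2

@[simp]
theorem lorentzForm_mk (u v : ℝ) (w : E) : lorentzForm (u, v, w) = u * v - ‖w‖ ^ 2 := rfl

theorem continuous_lorentzForm : Continuous (lorentzForm : ℝ × ℝ × E → ℝ) := by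
  unfold lorentzForm; fun_prop

theorem image_prod_eq_lorentzForm_preimage_inter {I J : Set ℝ} (hJ : 0 ∉ J) :
    (fun p : ℝ × ℝ × E => (p.1, (p.2.1 + ‖p.2.2‖ ^ 2) / p.1, p.2.2)) '' (J ×ˢ I ×ˢ univ) =
      lorentzForm ⁻¹' I ∩ Prod.fst ⁻¹' J := by
  ext ⟨u, v, w⟩
  constructor
  · rintro ⟨⟨u', q, w'⟩, ⟨hu, hq, -⟩, h⟩
    simp only [Prod.mk.injEq] at h
    obtain ⟨rfl, rfl, rfl⟩ := h
    have hu0 : u' ≠ 0 := fun h => hJ (h ▸ hu)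
    refine ⟨?_, hu⟩
    simp only [mem_preimage, lorentzForm_mk]
    field_simp
    simpa using hq
  · rintro ⟨hq, hu⟩
    have hu0 : u ≠ 0 := fun h => hJ (h ▸ hu)
    refine ⟨(u, lorentzForm (u, v, w), w), ⟨hu, hq, mem_univ w⟩, ?_⟩
    simp only [lorentzForm_mk, Prod.mk.injEq]
    field_simp
    simp

theorem mem_closure_lorentzForm_preimage_inter {I J : Set ℝ} (hJ : (0 : ℝ) ∈ closure J) {w : E}
    (hw : -‖w‖ ^ 2 ∈ I) :
    ((0 : ℝ), (0 : ℝ), w) ∈ closure (lorentzForm ⁻¹' I ∩ Prod.fst ⁻¹' J) :=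
  map_mem_closure (f := fun t : ℝ => (t, (0 : ℝ), w)) (by fun_prop) hJ fun t ht =>
    ⟨by simpa using hw, ht⟩

theorem fst_ne_zero_of_le_lorentzForm {c : ℝ} (hc : 0 < c) {x : ℝ × ℝ × E}
    (hx : c ≤ lorentzForm x) : x.1 ≠ 0 := by
  obtain ⟨u, v, w⟩ := x
  rintro rfl
  simp only [lorentzForm_mk, zero_mul, zero_sub] at hx
  nlinarith [sq_nonneg ‖w‖]

theorem setOf_le_lorentzForm_subset {c : ℝ} (hc : 0 < c) :
    {x : ℝ × ℝ × E | c ≤ lorentzForm x} ⊆ {x | 0 < x.1} ∪ {x | x.1 < 0} :=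
  fun _ hx => (fst_ne_zero_of_le_lorentzForm hc hx).lt_or_gt.symm

variable [NormedSpace ℝ E]

theorem isConnected_lorentzForm_preimage_inter {I J : Set ℝ} (hI : IsConnected I)
    (hJ : IsConnected J) (h0 : 0 ∉ J) :
    IsConnected (lorentzForm ⁻¹' I ∩ Prod.fst ⁻¹' J : Set (ℝ × ℝ × E)) := by
  rw [← image_prod_eq_lorentzForm_preimage_inter h0]
  refine (hJ.prod (hI.prod isConnected_univ)).image _ ?_
  refine continuousOn_fst.prodMk (ContinuousOn.prodMk ?_ (by fun_prop))
  exact ContinuousOn.div (by fun_prop) continuousOn_fst fun p hp h => h0 (h ▸ hp.1)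

theorem isConnected_lorentzForm_preimage_inter_pos {I : Set ℝ} (hI : IsConnected I) :
    IsConnected (lorentzForm ⁻¹' I ∩ {x : ℝ × ℝ × E | 0 < x.1}) :=
  isConnected_lorentzForm_preimage_inter hI isConnected_Ioi self_notMem_Ioi

theorem isConnected_lorentzForm_preimage_inter_neg {I : Set ℝ} (hI : IsConnected I) :
    IsConnected (lorentzForm ⁻¹' I ∩ {x : ℝ × ℝ × E | x.1 < 0}) :=
  isConnected_lorentzForm_preimage_inter hI isConnected_Iio self_notMem_Iio

theorem isConnected_lorentzForm_preimage {I : Set ℝ} (hI : IsPreconnected I) {w₀ : E}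
    (hw₀ : -‖w₀‖ ^ 2 ∈ I) : IsConnected (lorentzForm ⁻¹' I : Set (ℝ × ℝ × E)) := by
  set S : Set (ℝ × ℝ × E) := lorentzForm ⁻¹' I
  have hIc : IsConnected I := ⟨⟨_, hw₀⟩, hI⟩
  set Z : Set (ℝ × ℝ × E) := (fun w => ((0 : ℝ), (0 : ℝ), w)) '' {w | -‖w‖ ^ 2 ∈ I}
  have hZS : Z ⊆ S := by rintro _ ⟨w, hw, rfl⟩; simpa [S] using hw
  have half : ∀ J : Set ℝ, IsConnected J → 0 ∉ J → (0 : ℝ) ∈ closure J →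
      IsPreconnected (S ∩ Prod.fst ⁻¹' J ∪ Z) := fun J hJ h0 hJ0 =>
    (isConnected_lorentzForm_preimage_inter (E := E) hIc hJ h0).isPreconnected.subset_closure
      subset_union_left (union_subset subset_closure <| by
        rintro _ ⟨w, hw, rfl⟩; exact mem_closure_lorentzForm_preimage_inter hJ0 hw)
  have hz₀ : ((0 : ℝ), (0 : ℝ), w₀) ∈ Z := ⟨w₀, hw₀, rfl⟩
  set M := (S ∩ Prod.fst ⁻¹' Ioi 0 ∪ Z) ∪ (S ∩ Prod.fst ⁻¹' Iio 0 ∪ Z)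
  have hM : IsPreconnected M :=
    (half _ isConnected_Ioi self_notMem_Ioi (by simp)).union _ (Or.inr hz₀) (Or.inr hz₀)
      (half _ isConnected_Iio self_notMem_Iio (by simp))
  have hMS : M ⊆ S :=
    union_subset (union_subset inter_subset_left hZS) (union_subset inter_subset_left hZS)
  refine ⟨⟨_, hZS hz₀⟩, isPreconnected_of_forall ((0 : ℝ), (0 : ℝ), w₀) fun y hy => ?_⟩
  obtain ⟨u, v, w⟩ := y
  rcases lt_trichotomy u 0 with hu | rfl | hu
  · exact ⟨M, hMS, Or.inl (Or.inr hz₀), Or.inr (Or.inl ⟨hy, hu⟩), hM⟩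
  · have hw : -‖w‖ ^ 2 ∈ I := by simpa [S] using hy
    have hline : (range fun t : ℝ => ((0 : ℝ), t, w)) ⊆ S := by
      rintro _ ⟨t, rfl⟩
      simpa [S] using hw
    exact ⟨M ∪ range fun t : ℝ => ((0 : ℝ), t, w), union_subset hMS hline,
      Or.inl (Or.inl (Or.inr hz₀)), Or.inr ⟨v, rfl⟩,
      hM.union _ (Or.inl (Or.inr ⟨w, hw, rfl⟩)) ⟨0, rfl⟩ (isPreconnected_range (by fun_prop))⟩
  · exact ⟨M, hMS, Or.inl (Or.inr hz₀), Or.inl (Or.inl ⟨hy, hu⟩), hM⟩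

theorem isConnected_setOf_lorentzForm_lt_of_pos {c : ℝ} (hc : 0 < c) :
    IsConnected {x : ℝ × ℝ × E | lorentzForm x < c} :=
  isConnected_lorentzForm_preimage (I := Iio c) isPreconnected_Iio (w₀ := (0 : E))
    (by simpa using hc)

theorem isConnected_setOf_lorentzForm_lt [Nontrivial E] (c : ℝ) :
    IsConnected {x : ℝ × ℝ × E | lorentzForm x < c} := by
  obtain ⟨w₀, hw₀⟩ := exists_norm_eq E (by positivity : 0 ≤ |c| + 1)
  refine isConnected_lorentzForm_preimage (I := Iio c) isPreconnected_Iio (w₀ := w₀) ?_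
  rw [mem_Iio, hw₀]
  nlinarith [neg_abs_le c, abs_nonneg c]

theorem isConnected_setOf_lt_lorentzForm {c : ℝ} (hc : c < 0) :
    IsConnected {x : ℝ × ℝ × E | c < lorentzForm x} :=
  isConnected_lorentzForm_preimage (I := Ioi c) isPreconnected_Ioi (w₀ := (0 : E))
    (by simpa using hc)

theorem isConnected_setOf_lorentzForm_eq [Nontrivial E] {c : ℝ} (hc : c < 0) :
    IsConnected {x : ℝ × ℝ × E | lorentzForm x = c} := by
  obtain ⟨w₀, hw₀⟩ := exists_norm_eq E (Real.sqrt_nonneg (-c))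
  refine isConnected_lorentzForm_preimage (I := {c}) isPreconnected_singleton (w₀ := w₀) ?_
  rw [mem_singleton_iff, hw₀, Real.sq_sqrt (by linarith), neg_neg]

theorem connectedComponentIn_setOf_lorentzForm_eq {c : ℝ} (hc : 0 < c) {x : ℝ × ℝ × E}
    (hx : lorentzForm x = c) :
    connectedComponentIn {y | lorentzForm y = c} x = {y | lorentzForm y = c} ∩ {y | 0 < y.1} ∨
      connectedComponentIn {y | lorentzForm y = c} x =
        {y | lorentzForm y = c} ∩ {y | y.1 < 0} := by
  have hS : {y : ℝ × ℝ × E | lorentzForm y = c} ⊆ {y | 0 < y.1} ∪ {y | y.1 < 0} :=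
    fun _ hy => setOf_le_lorentzForm_subset hc (le_of_eq (Eq.symm hy))
  have hpos : IsOpen {y : ℝ × ℝ × E | 0 < y.1} := isOpen_lt continuous_const continuous_fst
  have hneg : IsOpen {y : ℝ × ℝ × E | y.1 < 0} := isOpen_lt continuous_fst continuous_const
  have hdisj : Disjoint {y : ℝ × ℝ × E | 0 < y.1} {y | y.1 < 0} :=
    Ioi_disjoint_Iio_same.preimage Prod.fst
  rcases (fst_ne_zero_of_le_lorentzForm hc hx.ge).lt_or_gt with hu | hu
  · exact .inr <| connectedComponentIn_eq_inter_of_subset_union hneg hpos hdisj.symm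
      (fun _ hy => (hS hy).symm)
      (isConnected_lorentzForm_preimage_inter_neg isConnected_singleton).isPreconnected ⟨hx, hu⟩
  · exact .inl <| connectedComponentIn_eq_inter_of_subset_union hpos hneg hdisj hS
      (isConnected_lorentzForm_preimage_inter_pos isConnected_singleton).isPreconnected ⟨hx, hu⟩

theorem connectedComponentIn_setOf_lorentzForm_ne_of_pos {c : ℝ} (hc : 0 < c)
    {x : ℝ × ℝ × E} (hx : lorentzForm x ≠ c) :
    connectedComponentIn {y | lorentzForm y ≠ c} x = {y | lorentzForm y < c} ∨
      connectedComponentIn {y | lorentzForm y ≠ c} x =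
        {y | c < lorentzForm y} ∩ {y | 0 < y.1} ∨
      connectedComponentIn {y | lorentzForm y ≠ c} x =
        {y | c < lorentzForm y} ∩ {y | y.1 < 0} := by
  have hlt : IsOpen {y : ℝ × ℝ × E | lorentzForm y < c} :=
    isOpen_lt continuous_lorentzForm continuous_const
  have hgt : IsOpen {y : ℝ × ℝ × E | c < lorentzForm y} :=
    isOpen_lt continuous_const continuous_lorentzForm
  have hpos : IsOpen {y : ℝ × ℝ × E | 0 < y.1} := isOpen_lt continuous_const continuous_fst
  have hneg : IsOpen {y : ℝ × ℝ × E | y.1 < 0} := isOpen_lt continuous_fst continuous_const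
  have hQ : Disjoint {y : ℝ × ℝ × E | c < lorentzForm y} {y | lorentzForm y < c} :=
    Ioi_disjoint_Iio_same.preimage lorentzForm
  have hu : Disjoint {y : ℝ × ℝ × E | 0 < y.1} {y | y.1 < 0} :=
    Ioi_disjoint_Iio_same.preimage Prod.fst
  have hcases : ∀ y : ℝ × ℝ × E, lorentzForm y ≠ c →
      lorentzForm y < c ∨ (c < lorentzForm y ∧ 0 < y.1) ∨ (c < lorentzForm y ∧ y.1 < 0) := by
    intro y hy
    refine hy.lt_or_gt.imp_right fun h => ?_
    exact (fst_ne_zero_of_le_lorentzForm hc h.le).lt_or_gt.symm.imp (⟨h, ·⟩) (⟨h, ·⟩)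
  rcases hcases x hx with h | h | h
  · exact .inl <| connectedComponentIn_eq_of_subset_union hlt hgt hQ.symm
      (fun y (hy : lorentzForm y ≠ c) => hy.lt_or_gt) (fun _ hy => ne_of_lt hy)
      (isConnected_setOf_lorentzForm_lt_of_pos hc).isPreconnected h
  · refine .inr <| .inl <| connectedComponentIn_eq_of_subset_union (hgt.inter hpos)
      (hlt.union hneg) ((hQ.mono_left inter_subset_left).union_right
        (hu.mono_left inter_subset_right)) (fun y hy => ?_) (fun _ hy => hy.1.ne')
      (isConnected_lorentzForm_preimage_inter_pos isConnected_Ioi).isPreconnected h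
    rcases hcases y hy with h | h | h
    exacts [.inr (.inl h), .inl h, .inr (.inr h.2)]
  · refine .inr <| .inr <| connectedComponentIn_eq_of_subset_union (hgt.inter hneg)
      (hlt.union hpos) ((hQ.mono_left inter_subset_left).union_right
        (hu.symm.mono_left inter_subset_right)) (fun y hy => ?_) (fun _ hy => hy.1.ne')
      (isConnected_lorentzForm_preimage_inter_neg isConnected_Ioi).isPreconnected h
    rcases hcases y hy with h | h | h
    exacts [.inr (.inl h), .inr (.inr h.2), .inl h]

theorem connectedComponentIn_setOf_lorentzForm_ne_of_neg [Nontrivial E] {c : ℝ} (hc : c < 0)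
    {x : ℝ × ℝ × E} (hx : lorentzForm x ≠ c) :
    connectedComponentIn {y | lorentzForm y ≠ c} x = {y | lorentzForm y < c} ∨
      connectedComponentIn {y | lorentzForm y ≠ c} x = {y | c < lorentzForm y} := by
  have hlt : IsOpen {y : ℝ × ℝ × E | lorentzForm y < c} :=
    isOpen_lt continuous_lorentzForm continuous_const
  have hgt : IsOpen {y : ℝ × ℝ × E | c < lorentzForm y} :=
    isOpen_lt continuous_const continuous_lorentzForm
  have hdisj : Disjoint {y : ℝ × ℝ × E | lorentzForm y < c} {y | c < lorentzForm y} :=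
    Iio_disjoint_Ioi_same.preimage lorentzForm
  exact hx.lt_or_gt.imp
    (connectedComponentIn_eq_of_subset_union hlt hgt hdisj
      (fun y (hy : lorentzForm y ≠ c) => hy.lt_or_gt) (fun _ hy => ne_of_lt hy)
      (isConnected_setOf_lorentzForm_lt c).isPreconnected)
    (connectedComponentIn_eq_of_subset_union hgt hlt hdisj.symm
      (fun y (hy : lorentzForm y ≠ c) => hy.lt_or_gt.symm) (fun _ hy => ne_of_gt hy)
      (isConnected_setOf_lt_lorentzForm hc).isPreconnected)

end LorentzForm

/-- Structure of the level sets of `Q(u,v,w) = uv − ‖w‖²`.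
(i) For `c > 0`, the level set `{Q = c}` has exactly two connected components, namely
`{Q = c} ∩ {u > 0}` and `{Q = c} ∩ {u < 0}`, and its complement has exactly three,
namely `{Q < c}`, `{Q > c} ∩ {u > 0}` and `{Q > c} ∩ {u < 0}`.
(ii) For `c < 0`, the level set `{Q = c}` is nonempty and connected and its complement
has exactly two connected components, `{Q < c}` and `{Q > c}`.
("Exactly these components" is expressed by: each named set is connected (hence
nonempty) and every connected component in the ambient set equals one of them.) -/
theorem stmt_11 :
    (∀ c : ℝ, 0 < c →
      IsConnected ({x | Qf x = c} ∩ {x | 0 < x.1}) ∧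
      IsConnected ({x | Qf x = c} ∩ {x | x.1 < 0}) ∧
      {x | Qf x = c} =
        ({x | Qf x = c} ∩ {x | 0 < x.1}) ∪ ({x | Qf x = c} ∩ {x | x.1 < 0}) ∧
      (∀ x, Qf x = c →
        connectedComponentIn {y | Qf y = c} x = {y | Qf y = c} ∩ {y | 0 < y.1} ∨
        connectedComponentIn {y | Qf y = c} x = {y | Qf y = c} ∩ {y | y.1 < 0}) ∧
      IsConnected {x | Qf x < c} ∧
      IsConnected ({x | c < Qf x} ∩ {x | 0 < x.1}) ∧
      IsConnected ({x | c < Qf x} ∩ {x | x.1 < 0}) ∧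
      (∀ x, Qf x ≠ c →
        connectedComponentIn {y | Qf y ≠ c} x = {y | Qf y < c} ∨
        connectedComponentIn {y | Qf y ≠ c} x = {y | c < Qf y} ∩ {y | 0 < y.1} ∨
        connectedComponentIn {y | Qf y ≠ c} x = {y | c < Qf y} ∩ {y | y.1 < 0})) ∧
    (∀ c : ℝ, c < 0 →
      IsConnected {x | Qf x = c} ∧
      IsConnected {x | Qf x < c} ∧
      IsConnected {x | c < Qf x} ∧
      (∀ x, Qf x ≠ c →
        connectedComponentIn {y | Qf y ≠ c} x = {y | Qf y < c} ∨
        connectedComponentIn {y | Qf y ≠ c} x = {y | c < Qf y})) := by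
  rw [show Qf = (lorentzForm : ℝ × ℝ × EuclideanSpace ℝ (Fin 2) → ℝ) from rfl]
  refine ⟨fun c hc => ⟨isConnected_lorentzForm_preimage_inter_pos isConnected_singleton,
      isConnected_lorentzForm_preimage_inter_neg isConnected_singleton, ?_,
      fun _ hx => connectedComponentIn_setOf_lorentzForm_eq hc hx,
      isConnected_setOf_lorentzForm_lt_of_pos hc,
      isConnected_lorentzForm_preimage_inter_pos isConnected_Ioi,
      isConnected_lorentzForm_preimage_inter_neg isConnected_Ioi,
      fun _ hx => connectedComponentIn_setOf_lorentzForm_ne_of_pos hc hx⟩,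
    fun c hc => ⟨isConnected_setOf_lorentzForm_eq hc, isConnected_setOf_lorentzForm_lt c,
      isConnected_setOf_lt_lorentzForm hc,
      fun _ hx => connectedComponentIn_setOf_lorentzForm_ne_of_neg hc hx⟩⟩
  rw [← inter_union_distrib_left, left_eq_inter]
  exact fun _ hx => setOf_le_lorentzForm_subset hc (le_of_eq (Eq.symm hx))
end

section
/- Let m be a probability measure on a measurable space X, let c ≥ 1, and let ρ, σ : X → [0,∞) be measurable with ∫ ρ dm = ∫ σ dm = 1 and ρ ≤ c·σ m-almost everywhere. Then, with u(t) := t·log t (and u(0) := 0, and with the convention (c−1)·log(c−1) := 0 when c = 1), one has ∫ u(ρ) dm ≤ ∫ u(c·σ) dm − u(c−1) = c·∫ u(σ) dm + c·log c − (c−1)·log(c−1), where all integrals are well-defined in ℝ ∪ {+∞} since u ≥ −e⁻¹. -/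
open MeasureTheory
open scoped ENNReal

/-- The Boltzmann–Shannon entropy `∫ u(f) dm ∈ ℝ ∪ {+∞}` of a nonnegative density `f`
with respect to a probability measure `m`, where `u t = t log t`.  Since `u ≥ −e⁻¹`, it
is well-defined as the extended real `∫⁻ (u ∘ f + e⁻¹) dm − e⁻¹` (no truncation occurs
in `ENNReal.ofReal`). -/
noncomputable def entE {X : Type*} [MeasurableSpace X] (m : Measure X)
    (f : X → ℝ) : EReal :=
  ((∫⁻ x, ENNReal.ofReal (f x * Real.log (f x) + Real.exp (-1)) ∂m : ENNReal) : EReal)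
    - ((Real.exp (-1) : ℝ) : EReal)

private lemma neg_exp_le_mul_log {t : ℝ} (ht : 0 ≤ t) :
    -(Real.exp (-1)) ≤ t * Real.log t := by
  rcases eq_or_lt_of_le ht with h | h
  · rw [← h]; simp; positivity
  · have h1 := Real.log_le_sub_one_of_pos (show (0:ℝ) < Real.exp (-1) / t by positivity)
    rw [Real.log_div (Real.exp_ne_zero _) (ne_of_gt h), Real.log_exp] at h1
    have h2 : (-Real.log t) * t ≤ Real.exp (-1) := by
      rw [← le_div_iff₀ h]; linarith
    nlinarith

private lemma mul_log_superadd {a b : ℝ} (hb : 0 ≤ b) (hba : b ≤ a) :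
    (a - b) * Real.log (a - b) + b * Real.log b ≤ a * Real.log a := by
  by_cases hb0 : b = 0
  · simp [hb0]
  by_cases hab : a = b
  · simp [hab]
  have hbpos : 0 < b := lt_of_le_of_ne hb (Ne.symm hb0)
  have hablt : b < a := lt_of_le_of_ne hba (Ne.symm hab)
  have ha : 0 < a := hbpos.trans hablt
  have h1 : Real.log (a - b) ≤ Real.log a :=
    (Real.log_le_log_iff (by linarith) ha).mpr (by linarith)
  have h2 : Real.log b ≤ Real.log a := (Real.log_le_log_iff hbpos ha).mpr hba
  nlinarith

private lemma integrable_of_lint {X : Type*} [MeasurableSpace X] {m : Measure X} {f : X → ℝ}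
    (hm : Measurable f) (h0 : ∀ x, 0 ≤ f x)
    (hfin : ∫⁻ x, ENNReal.ofReal (f x) ∂m ≠ ⊤) : Integrable f m := by
  refine ⟨hm.aestronglyMeasurable, ?_⟩
  rw [hasFiniteIntegral_iff_norm]
  have : ∀ x, ENNReal.ofReal ‖f x‖ = ENNReal.ofReal (f x) := fun x => by
    rw [Real.norm_eq_abs, abs_of_nonneg (h0 x)]
  simp_rw [this]
  exact lt_top_iff_ne_top.mpr hfin

private lemma entE_top {X : Type*} [MeasurableSpace X] (m : Measure X) (f : X → ℝ)
    (h : ∫⁻ x, ENNReal.ofReal (f x * Real.log (f x) + Real.exp (-1)) ∂m = ⊤) :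
    entE m f = ⊤ := by
  rw [entE, h, EReal.coe_ennreal_top, EReal.top_sub_coe]

private lemma entE_eq {X : Type*} [MeasurableSpace X] (m : Measure X) [IsProbabilityMeasure m]
    (f : X → ℝ) (hf0 : ∀ x, 0 ≤ f x)
    (hint : Integrable (fun x => f x * Real.log (f x)) m) :
    entE m f = ((∫ x, f x * Real.log (f x) ∂m : ℝ) : EReal) := by
  have hnn : ∀ x, 0 ≤ f x * Real.log (f x) + Real.exp (-1) := fun x => by
    have := neg_exp_le_mul_log (hf0 x); linarith
  have hint2 : Integrable (fun x => f x * Real.log (f x) + Real.exp (-1)) m :=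
    hint.add (integrable_const _)
  have h1 : ENNReal.ofReal (∫ x, (f x * Real.log (f x) + Real.exp (-1)) ∂m)
      = ∫⁻ x, ENNReal.ofReal (f x * Real.log (f x) + Real.exp (-1)) ∂m :=
    ofReal_integral_eq_lintegral_ofReal hint2 (Filter.Eventually.of_forall hnn)
  have h2 : ∫ x, (f x * Real.log (f x) + Real.exp (-1)) ∂m
      = (∫ x, f x * Real.log (f x) ∂m) + Real.exp (-1) := by
    rw [integral_add hint (integrable_const _), integral_const]; simp
  have h3 : 0 ≤ ∫ x, (f x * Real.log (f x) + Real.exp (-1)) ∂m :=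
    integral_nonneg hnn
  rw [entE, ← h1, EReal.coe_ennreal_ofReal, max_eq_left h3, h2, ← EReal.coe_sub]
  norm_num

/-- Let `m` be a probability measure, `c ≥ 1`, and `ρ, σ ≥ 0`
measurable densities of probability measures with `ρ ≤ c·σ` a.e.  Then, with
`u t = t log t` (and `0·log 0 = 0`),
`∫ u(ρ) dm ≤ ∫ u(c·σ) dm − u(c−1) = c·∫ u(σ) dm + c log c − (c−1) log (c−1)`,
as an inequality and an identity of extended reals in `ℝ ∪ {+∞}`. -/
theorem stmt_15 {X : Type*} [MeasurableSpace X] (m : Measure X) [IsProbabilityMeasure m]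
    (c : ℝ) (hc : 1 ≤ c) (ρ σ : X → ℝ) (hρm : Measurable ρ) (hσm : Measurable σ)
    (hρ0 : ∀ x, 0 ≤ ρ x) (hσ0 : ∀ x, 0 ≤ σ x)
    (hρ1 : ∫⁻ x, ENNReal.ofReal (ρ x) ∂m = 1)
    (hσ1 : ∫⁻ x, ENNReal.ofReal (σ x) ∂m = 1)
    (hle : ∀ᵐ x ∂m, ρ x ≤ c * σ x) :
    entE m ρ ≤ entE m (fun x => c * σ x) - (((c - 1) * Real.log (c - 1) : ℝ) : EReal) ∧
    entE m (fun x => c * σ x) - (((c - 1) * Real.log (c - 1) : ℝ) : EReal)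
      = (c : EReal) * entE m σ
        + ((c * Real.log c - (c - 1) * Real.log (c - 1) : ℝ) : EReal) := by
  have hc0 : (0:ℝ) < c := by linarith
  have he : (0:ℝ) < Real.exp (-1) := Real.exp_pos _
  have hclogc : 0 ≤ c * Real.log c := mul_nonneg hc0.le (Real.log_nonneg hc)
  have hmσ : Measurable fun x => σ x * Real.log (σ x) :=
    hσm.mul (Real.measurable_log.comp hσm)
  have hmcσ : Measurable fun x => c * σ x * Real.log (c * σ x) :=
    (measurable_const.mul hσm).mul (Real.measurable_log.comp (measurable_const.mul hσm))
  have hmρ : Measurable fun x => ρ x * Real.log (ρ x) :=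
    hρm.mul (Real.measurable_log.comp hρm)
  set Iσ : ℝ≥0∞ := ∫⁻ x, ENNReal.ofReal (σ x * Real.log (σ x) + Real.exp (-1)) ∂m with hIσdef
  set Icσ : ℝ≥0∞ := ∫⁻ x, ENNReal.ofReal (c * σ x * Real.log (c * σ x) + Real.exp (-1)) ∂m
    with hIcσdef
  -- the key scaling identity
  have hptwise : ∀ x, ENNReal.ofReal (c * σ x * Real.log (c * σ x) + Real.exp (-1))
        + ENNReal.ofReal ((c - 1) * Real.exp (-1))
      = ENNReal.ofReal (c * (σ x * Real.log (σ x) + Real.exp (-1)))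
        + ENNReal.ofReal (c * Real.log c * σ x) := by
    intro x
    have hA : 0 ≤ c * σ x * Real.log (c * σ x) + Real.exp (-1) := by
      have := neg_exp_le_mul_log (mul_nonneg hc0.le (hσ0 x)); linarith
    have hB : (0:ℝ) ≤ (c - 1) * Real.exp (-1) := mul_nonneg (by linarith) he.le
    have hC : 0 ≤ c * (σ x * Real.log (σ x) + Real.exp (-1)) := by
      have := neg_exp_le_mul_log (hσ0 x); nlinarith
    have hD : 0 ≤ c * Real.log c * σ x := mul_nonneg hclogc (hσ0 x)
    rw [← ENNReal.ofReal_add hA hB, ← ENNReal.ofReal_add hC hD]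
    congr 1
    by_cases hσx : σ x = 0
    · rw [hσx]; ring
    · rw [Real.log_mul (ne_of_gt hc0) hσx]; ring
  have star : Icσ + ENNReal.ofReal ((c - 1) * Real.exp (-1))
      = ENNReal.ofReal c * Iσ + ENNReal.ofReal (c * Real.log c) := by
    have h1 : Icσ + ENNReal.ofReal ((c - 1) * Real.exp (-1))
        = ∫⁻ x, (ENNReal.ofReal (c * σ x * Real.log (c * σ x) + Real.exp (-1))
            + ENNReal.ofReal ((c - 1) * Real.exp (-1))) ∂m := by
      rw [lintegral_add_right _ measurable_const, lintegral_const, measure_univ, mul_one]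
    rw [h1]
    simp_rw [hptwise]
    rw [lintegral_add_left (((hmσ.add_const _).const_mul c).ennreal_ofReal)]
    congr 1
    · simp_rw [ENNReal.ofReal_mul hc0.le]
      rw [lintegral_const_mul _ (hmσ.add_const _).ennreal_ofReal]
    · simp_rw [ENNReal.ofReal_mul hclogc]
      rw [lintegral_const_mul _ hσm.ennreal_ofReal, hσ1, mul_one]
  by_cases htop : Iσ = ⊤
  · -- infinite case: both sides are ⊤
    have hIcσ : Icσ = ⊤ := by
      rw [htop, ENNReal.mul_top (ne_of_gt (ENNReal.ofReal_pos.mpr hc0)), top_add] at star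
      exact (ENNReal.add_eq_top.mp star).resolve_right ENNReal.ofReal_ne_top
    have hEcσ : entE m (fun x => c * σ x) = ⊤ := entE_top m _ hIcσ
    have hEσ : entE m σ = ⊤ := entE_top m _ htop
    rw [hEcσ, hEσ, EReal.top_sub_coe]
    refine ⟨le_top, ?_⟩
    rw [EReal.coe_mul_top_of_pos (by exact_mod_cast hc0), EReal.top_add_coe]
  · -- finite case
    have hIcσfin : Icσ ≠ ⊤ := by
      intro h
      rw [h, top_add] at star
      exact (ENNReal.add_ne_top.mpr
        ⟨ENNReal.mul_ne_top ENNReal.ofReal_ne_top htop, ENNReal.ofReal_ne_top⟩) star.symm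
    -- integrability
    have hσnn : ∀ x, 0 ≤ σ x * Real.log (σ x) + Real.exp (-1) := fun x => by
      have := neg_exp_le_mul_log (hσ0 x); linarith
    have hcσnn : ∀ x, 0 ≤ c * σ x * Real.log (c * σ x) + Real.exp (-1) := fun x => by
      have := neg_exp_le_mul_log (mul_nonneg hc0.le (hσ0 x)); linarith
    have huσ_int : Integrable (fun x => σ x * Real.log (σ x)) m := by
      have h := integrable_of_lint (hmσ.add_const _) hσnn htop
      exact (h.sub (integrable_const (Real.exp (-1)))).congr
        (Filter.Eventually.of_forall fun x => by simp)
    have hucσ_int : Integrable (fun x => c * σ x * Real.log (c * σ x)) m := by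
      have h := integrable_of_lint (hmcσ.add_const _) hcσnn hIcσfin
      exact (h.sub (integrable_const (Real.exp (-1)))).congr
        (Filter.Eventually.of_forall fun x => by simp)
    have hσ_int : Integrable σ m := integrable_of_lint hσm hσ0 (by rw [hσ1]; simp)
    have hρ_int : Integrable ρ m := integrable_of_lint hρm hρ0 (by rw [hρ1]; simp)
    -- a.e. bounds
    have hbound : ∀ᵐ x ∂m, ρ x * Real.log (ρ x)
          + (c * σ x - ρ x) * Real.log (c * σ x - ρ x) ≤ c * σ x * Real.log (c * σ x) := by
      filter_upwards [hle] with x hx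
      have := mul_log_superadd (hρ0 x) hx
      linarith
    have huρ_int : Integrable (fun x => ρ x * Real.log (ρ x)) m := by
      refine Integrable.mono'
        (g := fun x => c * σ x * Real.log (c * σ x) + 2 * Real.exp (-1))
        (hucσ_int.add (integrable_const (2 * Real.exp (-1))))
        hmρ.aestronglyMeasurable ?_
      filter_upwards [hle] with x hx
      rw [Real.norm_eq_abs, abs_le]
      have h1 := neg_exp_le_mul_log (hρ0 x)
      have h2 := neg_exp_le_mul_log (show 0 ≤ c * σ x - ρ x by linarith [hρ0 x])
      have h3 := neg_exp_le_mul_log (mul_nonneg hc0.le (hσ0 x))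
      have h4 := mul_log_superadd (hρ0 x) hx
      constructor <;> linarith
    have hug_int : Integrable (fun x => (c * σ x - ρ x) * Real.log (c * σ x - ρ x)) m := by
      refine Integrable.mono'
        (g := fun x => c * σ x * Real.log (c * σ x) + 2 * Real.exp (-1))
        (hucσ_int.add (integrable_const (2 * Real.exp (-1))))
        (((measurable_const.mul hσm).sub hρm).mul
          (Real.measurable_log.comp ((measurable_const.mul hσm).sub hρm))).aestronglyMeasurable ?_
      filter_upwards [hle] with x hx
      rw [Real.norm_eq_abs, abs_le]
      have h1 := neg_exp_le_mul_log (hρ0 x)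
      have h2 := neg_exp_le_mul_log (show 0 ≤ c * σ x - ρ x by linarith [hρ0 x])
      have h3 := neg_exp_le_mul_log (mul_nonneg hc0.le (hσ0 x))
      have h4 := mul_log_superadd (hρ0 x) hx
      constructor <;> linarith
    -- values of real integrals
    have hintρ : ∫ x, ρ x ∂m = 1 := by
      rw [integral_eq_lintegral_of_nonneg_ae (Filter.Eventually.of_forall hρ0)
        hρm.aestronglyMeasurable, hρ1]
      simp
    have hintσ : ∫ x, σ x ∂m = 1 := by
      rw [integral_eq_lintegral_of_nonneg_ae (Filter.Eventually.of_forall hσ0)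
        hσm.aestronglyMeasurable, hσ1]
      simp
    have hintg : ∫ x, (c * σ x - ρ x) ∂m = c - 1 := by
      rw [integral_sub (hσ_int.const_mul c) hρ_int, integral_const_mul, hintσ, hintρ]
      ring
    -- Jensen's inequality
    have hJ : (c - 1) * Real.log (c - 1)
        ≤ ∫ x, (c * σ x - ρ x) * Real.log (c * σ x - ρ x) ∂m := by
      have := Real.convexOn_mul_log.map_integral_le (μ := m)
        (f := fun x => c * σ x - ρ x)
        Real.continuous_mul_log.continuousOn isClosed_Ici
        (hle.mono fun x hx => by simp only [Set.mem_Ici]; linarith [hρ0 x])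
        (by exact (hσ_int.const_mul c).sub hρ_int) (by exact hug_int)
      rwa [hintg] at this
    -- combine
    have hmono : (∫ x, ρ x * Real.log (ρ x) ∂m)
          + ∫ x, (c * σ x - ρ x) * Real.log (c * σ x - ρ x) ∂m
        ≤ ∫ x, c * σ x * Real.log (c * σ x) ∂m := by
      rw [← integral_add huρ_int hug_int]
      exact integral_mono_ae (huρ_int.add hug_int) hucσ_int hbound
    have hBreal : ∫ x, c * σ x * Real.log (c * σ x) ∂m
        = c * (∫ x, σ x * Real.log (σ x) ∂m) + c * Real.log c := by
      have h : ∀ x, c * σ x * Real.log (c * σ x)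
          = c * (σ x * Real.log (σ x)) + (c * Real.log c) * σ x := by
        intro x
        by_cases hσx : σ x = 0
        · rw [hσx]; ring
        · rw [Real.log_mul (ne_of_gt hc0) hσx]; ring
      simp_rw [h]
      rw [integral_add (huσ_int.const_mul c) (hσ_int.const_mul _), integral_const_mul,
        integral_const_mul, hintσ, mul_one]
    have hEρ := entE_eq m ρ hρ0 huρ_int
    have hEσ := entE_eq m σ hσ0 huσ_int
    have hEcσ : entE m (fun x => c * σ x)
        = ((∫ x, c * σ x * Real.log (c * σ x) ∂m : ℝ) : EReal) :=
      entE_eq m (fun x => c * σ x) (fun x => mul_nonneg hc0.le (hσ0 x)) hucσ_int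
    rw [hEρ, hEσ, hEcσ]
    constructor
    · rw [← EReal.coe_sub]
      exact EReal.coe_le_coe_iff.mpr (by linarith)
    · rw [← EReal.coe_sub, ← EReal.coe_mul, ← EReal.coe_add]
      exact congrArg _ (by rw [hBreal]; ring)
end

section
/- Let c > 0 and let q : ℝ⁴ → (symmetric bilinear forms on ℝ³) be continuous with q(x) positive semidefinite for every x ∈ ℝ⁴, and let τ be the associated time separation: for a Lipschitz curve λ : [0,1] → ℝ⁴ with a.e. derivative λ′ = (λ′₁, λ′_⊥) ∈ ℝ × ℝ³ set G_λ(t) := −c·(λ′₁(t))² + q(λ(t))(λ′_⊥(t), λ′_⊥(t)); λ is admissible if λ′₁ ≥ 0 and G_λ ≤ 0 a.e.; τ(p,p′) := sup{∫₀¹ √(−G_λ(t)) dt : λ admissible with λ(0) = p, λ(1) = p′}, with τ(p,p′) := 0 if no admissible curve exists. Let 𝔭 ∈ (0,1], n ≥ 1, 0 < r ≤ 1, x ∈ ℝ⁴, and x₁,…,x_n ∈ ℝ⁴ with Euclidean distance |xᵢ − x| ≤ r² for all i. Set xᵢ⁻ := xᵢ − r·e₁ and xᵢ⁺ := xᵢ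 + r·e₁, with the convention x_{n+1}⁺ := x₁⁺. Then ∑_{i=1}^n τ(xᵢ⁻, x_{i+1}⁺)^𝔭 ≤ n·(2r√c)^𝔭 = ∑_{i=1}^n τ(xᵢ⁻, xᵢ⁺)^𝔭. -/
open MeasureTheory Set

noncomputable section

/-- Euclidean `ℝ³`. -/
abbrev E3 : Type := EuclideanSpace ℝ (Fin 3)

/-- `ℝ⁴` split as `ℝ × ℝ³`, the first factor carrying the time direction `e₁`. -/
abbrev M4 : Type := ℝ × E3

/-- `G_λ(t) := −c·(λ′₁ t)² + q(λ t)(λ′_⊥ t, λ′_⊥ t)` for a curve `λ` with (a.e.)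
derivative `λ′ = (λ′₁, λ′_⊥)`. -/
def curveG (c : ℝ) (q : M4 → E3 →L[ℝ] E3 →L[ℝ] ℝ) (lam lam' : ℝ → M4) (t : ℝ) : ℝ :=
  -c * (lam' t).1 ^ 2 + q (lam t) (lam' t).2 (lam' t).2

/-- `(lam, lam')` is an admissible pair: `lam` is Lipschitz on `[0,1]`, `lam'` is an
a.e.-defined derivative of `lam` on `[0,1]`, and a.e. `λ′₁ ≥ 0` and `G_λ ≤ 0`
(future-directed causal for the metric `−c·dT² + q`). -/
def AdmissiblePair (c : ℝ) (q : M4 → E3 →L[ℝ] E3 →L[ℝ] ℝ) (lam lam' : ℝ → M4) : Prop :=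
  (∃ K : NNReal, LipschitzOnWith K lam (Icc 0 1)) ∧
  (∀ᵐ t ∂(volume.restrict (Icc (0:ℝ) 1)), HasDerivWithinAt lam (lam' t) (Icc 0 1) t) ∧
  (∀ᵐ t ∂(volume.restrict (Icc (0:ℝ) 1)), 0 ≤ (lam' t).1 ∧ curveG c q lam lam' t ≤ 0)

/-- The Lorentzian length `L(λ) = ∫₀¹ √(−G_λ(t)) dt`. -/
def lorLength (c : ℝ) (q : M4 → E3 →L[ℝ] E3 →L[ℝ] ℝ) (lam lam' : ℝ → M4) : ℝ :=
  ∫ t in Icc (0:ℝ) 1, Real.sqrt (-(curveG c q lam lam' t))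

/-- The time separation `τ(p,p') := sup {L(λ) : λ admissible Lipschitz from p to p'}`,
with `τ(p,p') = 0` if no admissible curve exists. -/
def timeSep (c : ℝ) (q : M4 → E3 →L[ℝ] E3 →L[ℝ] ℝ) (p p' : M4) : ℝ :=
  sSup (insert (0:ℝ) {L | ∃ lam lam' : ℝ → M4,
    AdmissiblePair c q lam lam' ∧ lam 0 = p ∧ lam 1 = p' ∧ L = lorLength c q lam lam'})

/-!
Along an admissible curve, positivity of `q` gives `√(-G_λ) ≤ √c · λ′₁`, and the time coordinate
`λ₁` is Lipschitz, hence absolutely continuous, so `∫ λ′₁ = λ₁(1) - λ₁(0)`. Thus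
`τ(a, b) ≤ √c · (b₁ - a₁)`, with equality along a purely temporal segment, which gives
`τ(xᵢ⁻, xᵢ⁺) = 2r√c`. For the cross terms the time gaps `(x_{i+1})₁ - (xᵢ)₁ + 2r` are nonnegative
because `|xᵢ - x| ≤ r² ≤ r`, and they telescope around the cycle to `2(n+1)r`; Jensen's inequality
for the concave `t ↦ t^𝔭` then bounds `∑ τ(xᵢ⁻, x_{i+1}⁺)^𝔭` by `(n+1)(2r√c)^𝔭`.
-/

open scoped NNReal

section LipschitzFTC

variable {F : Type*} [NormedAddCommGroup F] [NormedSpace ℝ F]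

lemma ae_eq_deriv_of_ae_hasDerivWithinAt_Icc {f f' : ℝ → F} {a b : ℝ}
    (h : ∀ᵐ t ∂volume.restrict (Icc a b), HasDerivWithinAt f (f' t) (Icc a b) t) :
    f' =ᵐ[volume.restrict (Icc a b)] deriv f := by
  have hIoo : ∀ᵐ t ∂volume.restrict (Icc a b), t ∈ Ioo a b := by
    rw [← Measure.restrict_congr_set Ioo_ae_eq_Icc]
    exact ae_restrict_mem measurableSet_Ioo
  filter_upwards [h, hIoo] with t ht ht'
  exact (ht.hasDerivAt (Icc_mem_nhds ht'.1 ht'.2)).deriv.symm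

lemma LipschitzOnWith.integrableOn_of_ae_hasDerivWithinAt {g g' : ℝ → ℝ} {K : ℝ≥0} {a b : ℝ}
    (hab : a ≤ b) (hg : LipschitzOnWith K g (Icc a b))
    (hg' : ∀ᵐ t ∂volume.restrict (Icc a b), HasDerivWithinAt g (g' t) (Icc a b) t) :
    IntegrableOn g' (Icc a b) := by
  have hderiv := ((uIcc_of_le hab ▸ hg).absolutelyContinuousOnInterval).intervalIntegrable_deriv
  rw [intervalIntegrable_iff_integrableOn_Ioc_of_le hab, ← integrableOn_Icc_iff_integrableOn_Ioc]
    at hderiv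
  exact hderiv.congr_fun_ae (ae_eq_deriv_of_ae_hasDerivWithinAt_Icc hg').symm

lemma LipschitzOnWith.integral_Icc_eq_sub_of_ae_hasDerivWithinAt {g g' : ℝ → ℝ} {K : ℝ≥0}
    {a b : ℝ} (hab : a ≤ b) (hg : LipschitzOnWith K g (Icc a b))
    (hg' : ∀ᵐ t ∂volume.restrict (Icc a b), HasDerivWithinAt g (g' t) (Icc a b) t) :
    ∫ t in Icc a b, g' t = g b - g a := by
  rw [integral_congr_ae (ae_eq_deriv_of_ae_hasDerivWithinAt_Icc hg'), integral_Icc_eq_integral_Ioc,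
    ← intervalIntegral.integral_of_le hab]
  exact ((uIcc_of_le hab ▸ hg).absolutelyContinuousOnInterval).integral_deriv_eq_sub

end LipschitzFTC

section TimeSeparation

variable {c : ℝ} {q : M4 → E3 →L[ℝ] E3 →L[ℝ] ℝ}

lemma sqrt_neg_curveG_le (hq : ∀ x v, 0 ≤ q x v v) {lam lam' : ℝ → M4} {t : ℝ}
    (ht : 0 ≤ (lam' t).1) :
    √(-curveG c q lam lam' t) ≤ √c * (lam' t).1 := by
  calc √(-curveG c q lam lam' t) ≤ √(c * (lam' t).1 ^ 2) := by
        apply Real.sqrt_le_sqrt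
        have := hq (lam t) (lam' t).2
        simp only [curveG]
        linarith
    _ = √c * (lam' t).1 := by rw [Real.sqrt_mul' _ (sq_nonneg _), Real.sqrt_sq ht]

lemma AdmissiblePair.lorLength_le (hq : ∀ x v, 0 ≤ q x v v) {lam lam' : ℝ → M4}
    (h : AdmissiblePair c q lam lam') :
    lorLength c q lam lam' ≤ √c * ((lam 1).1 - (lam 0).1) := by
  obtain ⟨⟨K, hK⟩, hderiv, hcausal⟩ := h
  have hfst : LipschitzOnWith K (fun s => (lam s).1) (Icc 0 1) := by
    simpa [Function.comp_def] using LipschitzWith.prod_fst.comp_lipschitzOnWith hK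
  have hfst' : ∀ᵐ t ∂volume.restrict (Icc (0:ℝ) 1),
      HasDerivWithinAt (fun s => (lam s).1) (lam' t).1 (Icc 0 1) t :=
    hderiv.mono fun t ht => ht.hasFDerivWithinAt.fst
  calc lorLength c q lam lam' ≤ ∫ t in Icc (0:ℝ) 1, √c * (lam' t).1 :=
        integral_mono_of_nonneg (ae_of_all _ fun _ => Real.sqrt_nonneg _)
          ((hfst.integrableOn_of_ae_hasDerivWithinAt zero_le_one hfst').const_mul _)
          (hcausal.mono fun _ ht => sqrt_neg_curveG_le hq ht.1)
    _ = √c * ((lam 1).1 - (lam 0).1) := by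
      rw [integral_const_mul,
        hfst.integral_Icc_eq_sub_of_ae_hasDerivWithinAt zero_le_one hfst']

def causalLengths (c : ℝ) (q : M4 → E3 →L[ℝ] E3 →L[ℝ] ℝ) (p p' : M4) : Set ℝ :=
  {L | ∃ lam lam' : ℝ → M4,
    AdmissiblePair c q lam lam' ∧ lam 0 = p ∧ lam 1 = p' ∧ L = lorLength c q lam lam'}

lemma sqrt_mul_fst_sub_mem_upperBounds (hq : ∀ x v, 0 ≤ q x v v) (p p' : M4) :
    √c * (p'.1 - p.1) ∈ upperBounds (causalLengths c q p p') := by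
  rintro L ⟨lam, lam', h, rfl, rfl, rfl⟩
  exact h.lorLength_le hq

lemma timeSep_nonneg (p p' : M4) : 0 ≤ timeSep c q p p' := by
  refine Real.sSup_nonneg ?_
  rintro L (rfl | ⟨lam, lam', -, -, -, rfl⟩)
  exacts [le_rfl, integral_nonneg fun _ => Real.sqrt_nonneg _]

lemma timeSep_le_sqrt_mul_fst_sub (hq : ∀ x v, 0 ≤ q x v v) {p p' : M4} (h : p.1 ≤ p'.1) :
    timeSep c q p p' ≤ √c * (p'.1 - p.1) :=
  Real.sSup_le (forall_mem_insert.2 ⟨by positivity, sqrt_mul_fst_sub_mem_upperBounds hq p p'⟩)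
    (by positivity)

lemma AdmissiblePair.lorLength_le_timeSep (hq : ∀ x v, 0 ≤ q x v v) {lam lam' : ℝ → M4}
    (h : AdmissiblePair c q lam lam') :
    lorLength c q lam lam' ≤ timeSep c q (lam 0) (lam 1) :=
  le_csSup (BddAbove.insert 0 ⟨_, sqrt_mul_fst_sub_mem_upperBounds hq _ _⟩)
    (mem_insert_of_mem _ ⟨lam, lam', h, rfl, rfl, rfl⟩)

lemma timeSep_of_snd_eq (hc : 0 ≤ c) (hq : ∀ x v, 0 ≤ q x v v) {p p' : M4} (hsnd : p.2 = p'.2)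
    (h : p.1 ≤ p'.1) : timeSep c q p p' = √c * (p'.1 - p.1) := by
  refine le_antisymm (timeSep_le_sqrt_mul_fst_sub hq h) ?_
  have hv : p' - p = (p'.1 - p.1, 0) := by ext <;> simp [hsnd]
  have hG : ∀ t, curveG c q (AffineMap.lineMap p p') (fun _ => p' - p) t
      = -(c * (p'.1 - p.1) ^ 2) := by
    simp [curveG, hv]
  have hadm : AdmissiblePair c q (AffineMap.lineMap p p') (fun _ => p' - p) :=
    ⟨⟨_, (lipschitzWith_lineMap p p').lipschitzOnWith⟩,
      ae_of_all _ fun _ => AffineMap.hasDerivWithinAt_lineMap,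
      ae_of_all _ fun t => ⟨by simp [h], by rw [hG]; nlinarith⟩⟩
  calc √c * (p'.1 - p.1) = lorLength c q (AffineMap.lineMap p p') (fun _ => p' - p) := by
        simp only [lorLength, hG, neg_neg, Real.sqrt_mul' _ (sq_nonneg _),
          Real.sqrt_sq (sub_nonneg.2 h), setIntegral_const]
        simp
    _ ≤ timeSep c q p p' := by
      simpa using hadm.lorLength_le_timeSep hq

lemma timeSep_sub_add_le (hq : ∀ x v, 0 ≤ q x v v) {y z : M4} {r : ℝ} (h : y.1 - r ≤ z.1 + r) :
    timeSep c q (y - (r, 0)) (z + (r, 0)) ≤ √c * z.1 - √c * y.1 + 2 * r * √c := by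
  convert timeSep_le_sqrt_mul_fst_sub hq (p := y - (r, 0)) (p' := z + (r, 0)) (by simpa using h)
    using 1
  simp only [Prod.fst_add, Prod.fst_sub]
  ring

lemma timeSep_sub_add_self (hc : 0 ≤ c) (hq : ∀ x v, 0 ≤ q x v v) (y : M4) {r : ℝ}
    (hr : 0 ≤ r) : timeSep c q (y - (r, 0)) (y + (r, 0)) = 2 * r * √c := by
  rw [timeSep_of_snd_eq hc hq (by simp) (by simp only [Prod.fst_sub, Prod.fst_add]; linarith)]
  simp only [Prod.fst_add, Prod.fst_sub, add_sub_sub_cancel]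
  ring

end TimeSeparation

lemma Finset.sum_rpow_le_card_mul_rpow_mean {ι : Type*} (s : Finset ι) {a : ι → ℝ}
    (ha : ∀ i ∈ s, 0 ≤ a i) {p : ℝ} (hp₀ : 0 ≤ p) (hp₁ : p ≤ 1) :
    ∑ i ∈ s, a i ^ p ≤ s.card * ((∑ i ∈ s, a i) / s.card) ^ p := by
  rcases s.eq_empty_or_nonempty with rfl | hs
  · simp
  have hcard : (0 : ℝ) < s.card := by exact_mod_cast hs.card_pos
  have hjensen := (Real.concaveOn_rpow hp₀ hp₁).le_map_sum (t := s) (w := fun _ => (s.card : ℝ)⁻¹)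
    (p := a) (fun _ _ => by positivity) (by simp [hcard.ne']) ha
  simp only [smul_eq_mul, inv_mul_eq_div, ← Finset.sum_div] at hjensen
  rwa [div_le_iff₀' hcard] at hjensen

lemma Fintype.sum_rpow_comp_add_sub_add_le {ι : Type*} [AddGroup ι] [Fintype ι] (f : ι → ℝ)
    (k : ι) {d p : ℝ} (hf : ∀ i, 0 ≤ f (i + k) - f i + d) (hp₀ : 0 ≤ p) (hp₁ : p ≤ 1) :
    ∑ i, (f (i + k) - f i + d) ^ p ≤ Fintype.card ι * d ^ p := by
  have hsum : ∑ i, (f (i + k) - f i + d) = Fintype.card ι * d := by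
    have hshift : ∑ i, f (i + k) = ∑ i, f i :=
      Fintype.sum_equiv (Equiv.addRight k) _ _ fun _ => rfl
    simp [Finset.sum_add_distrib, hshift]
  have hcard : (0 : ℝ) < Fintype.card ι := Nat.cast_pos.2 Fintype.card_pos
  simpa [hsum, hcard.ne'] using Finset.univ.sum_rpow_le_card_mul_rpow_mean (fun i _ => hf i) hp₀ hp₁

theorem stmt_17_general (c : ℝ) (hc : 0 < c) (q : M4 → E3 →L[ℝ] E3 →L[ℝ] ℝ)
    (hqpos : ∀ x v, 0 ≤ q x v v)
    (pp : ℝ) (hpp : pp ∈ Ioc (0:ℝ) 1)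
    (n : ℕ) (r : ℝ) (hr0 : 0 < r) (hr1 : r ≤ 1)
    (x : M4) (xs : Fin (n + 1) → M4)
    (hxs : ∀ i, Real.sqrt ((xs i - x).1 ^ 2 + ‖(xs i - x).2‖ ^ 2) ≤ r ^ 2) :
    ∑ i, timeSep c q (xs i - (r, 0)) (xs (i + 1) + (r, 0)) ^ pp
      ≤ ((n : ℝ) + 1) * (2 * r * Real.sqrt c) ^ pp ∧
    ((n : ℝ) + 1) * (2 * r * Real.sqrt c) ^ pp
      = ∑ i, timeSep c q (xs i - (r, 0)) (xs i + (r, 0)) ^ pp := by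
  have hfst : ∀ i, |(xs i).1 - x.1| ≤ r ^ 2 := fun i =>
    (Real.abs_le_sqrt (le_add_of_nonneg_right (sq_nonneg _))).trans (by simpa using hxs i)
  have hcausal : ∀ i, (xs i).1 - r ≤ (xs (i + 1)).1 + r := fun i => by
    nlinarith [abs_le.1 (hfst i), abs_le.1 (hfst (i + 1))]
  set f : Fin (n + 1) → ℝ := fun i => √c * (xs i).1
  refine ⟨?_, by simp [timeSep_sub_add_self hc.le hqpos _ hr0.le]⟩
  calc ∑ i, timeSep c q (xs i - (r, 0)) (xs (i + 1) + (r, 0)) ^ pp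
      ≤ ∑ i, (f (i + 1) - f i + 2 * r * √c) ^ pp :=
        Finset.sum_le_sum fun i _ => Real.rpow_le_rpow (timeSep_nonneg _ _)
          (timeSep_sub_add_le hqpos (hcausal i)) hpp.1.le
    _ ≤ (n + 1) * (2 * r * √c) ^ pp := by
      simpa using Fintype.sum_rpow_comp_add_sub_add_le f 1
        (fun i => (timeSep_nonneg _ _).trans (timeSep_sub_add_le hqpos (hcausal i)))
        hpp.1.le hpp.2

/-- (`τ^𝔭`-cyclical monotonicity of shifted configurations.)
Let `τ` be the time separation of the metric `−c·dT² + q` as above, `𝔭 ∈ (0,1]`,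
`0 < r ≤ 1`, and `x₁, …, x_{n+1}` points within Euclidean distance `r²` of `x`.
With `xᵢ± := xᵢ ± r·e₁` and cyclic convention `x_{n+2}⁺ = x₁⁺`,
`∑ τ(xᵢ⁻, x_{i+1}⁺)^𝔭 ≤ (n+1)·(2r√c)^𝔭 = ∑ τ(xᵢ⁻, xᵢ⁺)^𝔭`. -/
theorem stmt_17 (c : ℝ) (hc : 0 < c) (q : M4 → E3 →L[ℝ] E3 →L[ℝ] ℝ)
    (hqc : Continuous q) (hqsym : ∀ x v w, q x v w = q x w v)
    (hqpos : ∀ x v, 0 ≤ q x v v)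
    (pp : ℝ) (hpp : pp ∈ Ioc (0:ℝ) 1)
    (n : ℕ) (r : ℝ) (hr0 : 0 < r) (hr1 : r ≤ 1)
    (x : M4) (xs : Fin (n + 1) → M4)
    (hxs : ∀ i, Real.sqrt ((xs i - x).1 ^ 2 + ‖(xs i - x).2‖ ^ 2) ≤ r ^ 2) :
    ∑ i, timeSep c q (xs i - (r, 0)) (xs (i + 1) + (r, 0)) ^ pp
      ≤ ((n : ℝ) + 1) * (2 * r * Real.sqrt c) ^ pp ∧
    ((n : ℝ) + 1) * (2 * r * Real.sqrt c) ^ pp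
      = ∑ i, timeSep c q (xs i - (r, 0)) (xs i + (r, 0)) ^ pp :=
  stmt_17_general c hc q hqpos pp hpp n r hr0 hr1 x xs hxs
end
end

section
/- Let E be a compact metric space, m and (m_j) Borel probability measures on E, and for each j let γ_j be a Borel probability measure on E × E with first marginal m and second marginal m_j, such that ∫_{E×E} d(x,y)² dγ_j(x,y) → 0 as j → ∞. Let ρ : E × E → [0,∞) be bounded and Borel measurable with ∫ ρ d(m ⊗ m) = 1, and set π := ρ·(m ⊗ m). For each j define π_j as the pushforward under the map (x₁,x₂,x₃,x₄) ↦ (x₂,x₄) of the measure ρ(x₁,x₃)·(γ_j ⊗ γ_j) on E⁴, where γ_j ⊗ γ_j is the product of γ_j in the variables (x₁,x₂) with γ_j in the variables (x₃,x₄). Then each π_j is a Borel probability measure on E × E which is absolutely continuous with respect to m_j ⊗ m_j, and π_j → π weakly as j → ∞. -/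
/-!
Integrating against `π_j`, resp. `π`, amounts to integrating over `γ_j ⊗ γ_j` the function
`ρ(x₁,x₃)` times `f(x₂,x₄)`, resp. `f(x₁,x₃)`: the image of `γ_j ⊗ γ_j` under `(x₁,x₃)` is
`m ⊗ m`, and its image under `(x₂,x₄)` is `m_j ⊗ m_j`, which also gives total mass one and
absolute continuity. Hence the two integrals differ by at most
`sup ρ · ∫ |f(x₂,x₄) - f(x₁,x₃)| d(γ_j ⊗ γ_j)`. By uniform continuity,
`|f q - f p| ≤ ε + K d(p,q)²` for every `ε > 0`, and `d((x₁,x₃),(x₂,x₄))²` is at most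
`d(x₁,x₂)² + d(x₃,x₄)²`, whose integral is twice the quadratic cost of `γ_j`.
-/

open MeasureTheory Filter Topology

/-- The plan obtained by gluing a plan with density `ρ` w.r.t. `m ⊗ m` along a coupling
`γ` of `m` with `m_j`: the pushforward under `(x₁,x₂,x₃,x₄) ↦ (x₂,x₄)` of the measure
`ρ(x₁,x₃)·(γ ⊗ γ)` on `E⁴` (pairing `γ` in `(x₁,x₂)` with `γ` in `(x₃,x₄)`). -/
noncomputable def gluedPlan {E : Type*} [MeasurableSpace E]
    (γ : Measure (E × E)) (ρ : E × E → ℝ) : Measure (E × E) :=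
  ((γ.prod γ).withDensity fun z => ENNReal.ofReal (ρ (z.1.1, z.2.1))).map
    fun z => (z.1.2, z.2.2)

lemma integral_withDensity_ofReal {α : Type*} [MeasurableSpace α] {μ : Measure α}
    {ρ : α → ℝ} (hρm : Measurable ρ) (hρ0 : ∀ x, 0 ≤ ρ x) (f : α → ℝ) :
    ∫ x, f x ∂μ.withDensity (fun x => ENNReal.ofReal (ρ x)) = ∫ x, ρ x * f x ∂μ := by
  rw [integral_withDensity_eq_integral_toReal_smul hρm.ennreal_ofReal
    (ae_of_all _ fun _ => ENNReal.ofReal_lt_top)]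
  simp_rw [ENNReal.toReal_ofReal (hρ0 _), smul_eq_mul]

section Gluing

variable {E : Type*} [MeasurableSpace E] {γ : Measure (E × E)} {ρ : E × E → ℝ}

lemma measurable_fst_fst : Measurable fun z : (E × E) × (E × E) => (z.1.1, z.2.1) :=
  measurable_fst.fst.prodMk measurable_snd.fst

lemma measurable_snd_snd : Measurable fun z : (E × E) × (E × E) => (z.1.2, z.2.2) :=
  measurable_fst.snd.prodMk measurable_snd.snd

lemma map_fst_fst_prod [SFinite γ] :
    (γ.prod γ).map (fun z => (z.1.1, z.2.1)) = (γ.map Prod.fst).prod (γ.map Prod.fst) :=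
  (Measure.map_prod_map γ γ measurable_fst measurable_fst).symm

lemma map_snd_snd_prod [SFinite γ] :
    (γ.prod γ).map (fun z => (z.1.2, z.2.2)) = (γ.map Prod.snd).prod (γ.map Prod.snd) :=
  (Measure.map_prod_map γ γ measurable_snd measurable_snd).symm

lemma gluedPlan_univ [SFinite γ] (hρm : Measurable ρ) :
    gluedPlan γ ρ Set.univ =
      ∫⁻ z, ENNReal.ofReal (ρ z) ∂(γ.map Prod.fst).prod (γ.map Prod.fst) := by
  rw [gluedPlan, Measure.map_apply measurable_snd_snd MeasurableSet.univ, Set.preimage_univ,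
    withDensity_apply _ MeasurableSet.univ, setLIntegral_univ, ← map_fst_fst_prod,
    lintegral_map hρm.ennreal_ofReal measurable_fst_fst]

lemma gluedPlan_absolutelyContinuous [SFinite γ] :
    gluedPlan γ ρ ≪ (γ.map Prod.snd).prod (γ.map Prod.snd) := by
  rw [← map_snd_snd_prod]
  exact (withDensity_absolutelyContinuous _ _).map measurable_snd_snd

lemma integral_gluedPlan (hρm : Measurable ρ) (hρ0 : ∀ z, 0 ≤ ρ z) {f : E × E → ℝ}
    (hf : Measurable f) :
    ∫ z, f z ∂gluedPlan γ ρ = ∫ z, ρ (z.1.1, z.2.1) * f (z.1.2, z.2.2) ∂γ.prod γ := by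
  rw [gluedPlan, integral_map measurable_snd_snd.aemeasurable hf.aestronglyMeasurable]
  exact integral_withDensity_ofReal (hρm.comp measurable_fst_fst) (fun _ => hρ0 _) _

lemma integral_withDensity_map_fst_prod [SFinite γ] (hρm : Measurable ρ) (hρ0 : ∀ z, 0 ≤ ρ z)
    {f : E × E → ℝ} (hf : Measurable f) :
    ∫ z, f z ∂((γ.map Prod.fst).prod (γ.map Prod.fst)).withDensity
        (fun z => ENNReal.ofReal (ρ z)) =
      ∫ z, ρ (z.1.1, z.2.1) * f (z.1.1, z.2.1) ∂γ.prod γ := by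
  rw [integral_withDensity_ofReal hρm hρ0, ← map_fst_fst_prod, integral_map
    measurable_fst_fst.aemeasurable (f := fun z => ρ z * f z) (hρm.mul hf).aestronglyMeasurable]

lemma abs_integral_gluedPlan_sub_le [IsFiniteMeasure γ] (hρm : Measurable ρ)
    (hρ0 : ∀ z, 0 ≤ ρ z) {C : ℝ} (hρC : ∀ z, ρ z ≤ C) {f : E × E → ℝ} (hf : Measurable f)
    {M : ℝ} (hfM : ∀ z, |f z| ≤ M) :
    |∫ z, f z ∂gluedPlan γ ρ - ∫ z, f z ∂((γ.map Prod.fst).prod (γ.map Prod.fst)).withDensity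
        (fun z => ENNReal.ofReal (ρ z))| ≤
      C * ∫ z, |f (z.1.2, z.2.2) - f (z.1.1, z.2.1)| ∂γ.prod γ := by
  have hρ' : Measurable fun z : (E × E) × (E × E) => ρ (z.1.1, z.2.1) :=
    hρm.comp measurable_fst_fst
  have hρ'C : ∀ z : (E × E) × (E × E), ‖ρ (z.1.1, z.2.1)‖ ≤ C := fun z => by
    rw [Real.norm_of_nonneg (hρ0 _)]; exact hρC _
  have hint : ∀ g : (E × E) × (E × E) → E × E, Measurable g →
      Integrable (fun z => ρ (z.1.1, z.2.1) * f (g z)) (γ.prod γ) := fun g hg =>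
    (Integrable.of_bound (hf.comp hg).aestronglyMeasurable M (ae_of_all _ fun z => hfM _)).bdd_mul
      hρ'.aestronglyMeasurable (ae_of_all _ hρ'C)
  rw [integral_gluedPlan hρm hρ0 hf, integral_withDensity_map_fst_prod hρm hρ0 hf,
    ← integral_sub (hint _ measurable_snd_snd) (hint _ measurable_fst_fst),
    ← integral_const_mul]
  have hdiff : Integrable (fun z => |f (z.1.2, z.2.2) - f (z.1.1, z.2.1)|) (γ.prod γ) :=
    .of_bound ((hf.comp measurable_snd_snd).sub
      (hf.comp measurable_fst_fst)).abs.aestronglyMeasurable (2 * M) (ae_of_all _ fun z => by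
        rw [Real.norm_eq_abs, abs_abs]
        linarith [abs_sub (f (z.1.2, z.2.2)) (f (z.1.1, z.2.1)), hfM (z.1.2, z.2.2),
          hfM (z.1.1, z.2.1)])
  refine (norm_integral_le_integral_norm _).trans (integral_mono
    ((hint _ measurable_snd_snd).sub (hint _ measurable_fst_fst)).norm (hdiff.const_mul C)
    fun z => ?_)
  simp only [Pi.sub_apply, ← mul_sub, norm_mul, Real.norm_eq_abs]
  exact mul_le_mul_of_nonneg_right (hρ'C z) (abs_nonneg _)

end Gluing

lemma UniformContinuous.abs_sub_le_add_mul_dist_sq {X : Type*} [PseudoMetricSpace X]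
    {f : X → ℝ} (hf : UniformContinuous f) {M : ℝ} (hM : ∀ x, |f x| ≤ M) {ε : ℝ} (hε : 0 < ε) :
    ∃ K ≥ 0, ∀ x y, |f y - f x| ≤ ε + K * dist x y ^ 2 := by
  obtain ⟨δ, hδ, hfδ⟩ := Metric.uniformContinuous_iff.mp hf ε hε
  refine ⟨2 * |M| / δ ^ 2, by positivity, fun x y => ?_⟩
  rcases lt_or_ge (dist x y) δ with hxy | hxy
  · have hfxy : |f y - f x| < ε := by simpa [Real.dist_eq, abs_sub_comm] using hfδ hxy
    have : 0 ≤ 2 * |M| / δ ^ 2 * dist x y ^ 2 := by positivity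
    linarith
  · have : 2 * |M| ≤ 2 * |M| / δ ^ 2 * dist x y ^ 2 := by
      rw [div_mul_eq_mul_div, le_div_iff₀ (by positivity)]
      gcongr
    linarith [abs_sub (f y) (f x), hM x, hM y, le_abs_self M]

lemma tendsto_integral_of_forall_le_add_mul {Ω ι : Type*} [MeasurableSpace Ω] {l : Filter ι}
    {μ : ι → Measure Ω} [∀ i, IsProbabilityMeasure (μ i)] {g c : Ω → ℝ} (hg0 : ∀ ω, 0 ≤ g ω)
    (hgi : ∀ i, Integrable g (μ i)) (hci : ∀ i, Integrable c (μ i))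
    (hgc : ∀ ε > 0, ∃ K, ∀ ω, g ω ≤ ε + K * c ω)
    (hc : Tendsto (fun i => ∫ ω, c ω ∂μ i) l (𝓝 0)) :
    Tendsto (fun i => ∫ ω, g ω ∂μ i) l (𝓝 0) := by
  refine tendsto_order.2 ⟨fun a ha => .of_forall fun i => ha.trans_le (integral_nonneg hg0),
    fun a ha => ?_⟩
  obtain ⟨K, hK⟩ := hgc (a / 2) (half_pos ha)
  have hKc : Tendsto (fun i => K * ∫ ω, c ω ∂μ i) l (𝓝 0) := by simpa using hc.const_mul K
  filter_upwards [(tendsto_order.1 hKc).2 (a / 2) (half_pos ha)] with i hi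
  calc ∫ ω, g ω ∂μ i ≤ ∫ ω, (a / 2 + K * c ω) ∂μ i :=
        integral_mono (hgi i) ((integrable_const _).add ((hci i).const_mul K)) hK
    _ = a / 2 + K * ∫ ω, c ω ∂μ i := by
        rw [integral_add (integrable_const _) ((hci i).const_mul K), integral_const_mul]
        simp
    _ < a := by linarith

lemma tendsto_integral_abs_sub_prod_of_tendsto_cost {E ι : Type*} [PseudoMetricSpace E]
    [CompactSpace E] [MeasurableSpace E] [BorelSpace E] {l : Filter ι}
    {γ : ι → Measure (E × E)} [∀ i, IsProbabilityMeasure (γ i)]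
    (hcost : Tendsto (fun i => ∫ z, dist z.1 z.2 ^ 2 ∂γ i) l (𝓝 0)) {f : E × E → ℝ}
    (hf : Continuous f) {M : ℝ} (hfM : ∀ z, |f z| ≤ M) :
    Tendsto (fun i => ∫ z, |f (z.1.2, z.2.2) - f (z.1.1, z.2.1)| ∂(γ i).prod (γ i)) l (𝓝 0) := by
  have hintegrable {h : (E × E) × (E × E) → ℝ} (hh : Continuous h) (i : ι) :
      Integrable h ((γ i).prod (γ i)) :=
    hh.integrable_of_hasCompactSupport (.of_compactSpace _)
  refine tendsto_integral_of_forall_le_add_mul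
    (c := fun z => dist z.1.1 z.1.2 ^ 2 + dist z.2.1 z.2.2 ^ 2)
    (fun _ => abs_nonneg _) (hintegrable (by fun_prop)) (hintegrable (by fun_prop))
    (fun ε hε => ?_) ?_
  · obtain ⟨K, hK0, hK⟩ :=
      (CompactSpace.uniformContinuous_of_continuous hf).abs_sub_le_add_mul_dist_sq hfM hε
    refine ⟨K, fun z => (hK _ _).trans ?_⟩
    gcongr
    rw [Prod.dist_eq]
    rcases max_choice (dist z.1.1 z.1.2) (dist z.2.1 z.2.2) with h | h <;> rw [h] <;>
      linarith [sq_nonneg (dist z.1.1 z.1.2), sq_nonneg (dist z.2.1 z.2.2)]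
  · have hc : ∀ i, ∫ z, (dist z.1.1 z.1.2 ^ 2 + dist z.2.1 z.2.2 ^ 2) ∂(γ i).prod (γ i) =
        ∫ z, dist z.1 z.2 ^ 2 ∂γ i + ∫ z, dist z.1 z.2 ^ 2 ∂γ i := fun i => by
      rw [integral_add (hintegrable (by fun_prop) i) (hintegrable (by fun_prop) i),
        integral_fun_fst (fun z : E × E => dist z.1 z.2 ^ 2),
        integral_fun_snd (fun z : E × E => dist z.1 z.2 ^ 2)]
      simp
    simpa [hc] using hcost.add hcost

theorem stmt_18_general {E : Type*} [MetricSpace E] [CompactSpace E]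
    [MeasurableSpace E] [BorelSpace E]
    (m : Measure E) (mj : ℕ → Measure E) (γ : ℕ → Measure (E × E))
    [∀ j, IsProbabilityMeasure (γ j)]
    (hγ1 : ∀ j, (γ j).map Prod.fst = m) (hγ2 : ∀ j, (γ j).map Prod.snd = mj j)
    (hcost : Tendsto (fun j => ∫ z : E × E, dist z.1 z.2 ^ 2 ∂(γ j)) atTop (𝓝 0))
    (ρ : E × E → ℝ) (hρm : Measurable ρ) (hρ0 : ∀ z, 0 ≤ ρ z) (hρb : ∃ C, ∀ z, ρ z ≤ C)
    (hρ1 : ∫⁻ z, ENNReal.ofReal (ρ z) ∂(m.prod m) = 1) :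
    (∀ j, IsProbabilityMeasure (gluedPlan (γ j) ρ)) ∧
    (∀ j, gluedPlan (γ j) ρ ≪ (mj j).prod (mj j)) ∧
    (∀ f : E × E → ℝ, Continuous f → (∃ C, ∀ z, |f z| ≤ C) →
      Tendsto (fun j => ∫ z, f z ∂(gluedPlan (γ j) ρ)) atTop
        (𝓝 (∫ z, f z ∂((m.prod m).withDensity fun z => ENNReal.ofReal (ρ z))))) := by
  refine ⟨fun j => ⟨?_⟩, fun j => hγ2 j ▸ gluedPlan_absolutelyContinuous,
    fun f hf ⟨M, hfM⟩ => ?_⟩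
  · rw [gluedPlan_univ hρm, hγ1, hρ1]
  obtain ⟨C, hC⟩ := hρb
  have hD := tendsto_integral_abs_sub_prod_of_tendsto_cost hcost hf hfM
  rw [tendsto_iff_norm_sub_tendsto_zero]
  refine squeeze_zero (fun _ => norm_nonneg _) (fun j => ?_) (by simpa using hD.const_mul C)
  rw [Real.norm_eq_abs, ← hγ1 j]
  exact abs_integral_gluedPlan_sub_le hρm hρ0 hC hf.measurable hfM

/-- Let `E` be a compact metric space, `γ_j` couplings of `m` with
`m_j` whose quadratic cost `∫ d(x,y)² dγ_j` tends to `0`, and `ρ` a bounded measurable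
probability density w.r.t. `m ⊗ m`, `π := ρ·(m ⊗ m)`.  Then the glued plans
`π_j := gluedPlan (γ_j) ρ` are Borel probability measures on `E × E`, absolutely
continuous w.r.t. `m_j ⊗ m_j`, and `π_j → π` weakly. -/
theorem stmt_18 {E : Type*} [MetricSpace E] [CompactSpace E]
    [MeasurableSpace E] [BorelSpace E]
    (m : Measure E) (mj : ℕ → Measure E) (γ : ℕ → Measure (E × E))
    [IsProbabilityMeasure m] [∀ j, IsProbabilityMeasure (mj j)]
    [∀ j, IsProbabilityMeasure (γ j)]
    (hγ1 : ∀ j, (γ j).map Prod.fst = m) (hγ2 : ∀ j, (γ j).map Prod.snd = mj j)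
    (hcost : Tendsto (fun j => ∫ z : E × E, dist z.1 z.2 ^ 2 ∂(γ j)) atTop (𝓝 0))
    (ρ : E × E → ℝ) (hρm : Measurable ρ) (hρ0 : ∀ z, 0 ≤ ρ z) (hρb : ∃ C, ∀ z, ρ z ≤ C)
    (hρ1 : ∫⁻ z, ENNReal.ofReal (ρ z) ∂(m.prod m) = 1) :
    (∀ j, IsProbabilityMeasure (gluedPlan (γ j) ρ)) ∧
    (∀ j, gluedPlan (γ j) ρ ≪ (mj j).prod (mj j)) ∧
    (∀ f : E × E → ℝ, Continuous f → (∃ C, ∀ z, |f z| ≤ C) →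
      Tendsto (fun j => ∫ z, f z ∂(gluedPlan (γ j) ρ)) atTop
        (𝓝 (∫ z, f z ∂((m.prod m).withDensity fun z => ENNReal.ofReal (ρ z))))) :=
  stmt_18_general m mj γ hγ1 hγ2 hcost ρ hρm hρ0 hρb hρ1
end
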